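/- arXiv:2308.14200 — 6 statements merged into one kernel-verified Lean document; each statement's English description precedes it below -/
import Mathlib

section
/- Let Ṽ : ℝ → ℝ be a function, e ∈ ℝ, and let f : ℝ → ℝ be twice continuously differentiable with ∫_ℝ f(y)² dy < ∞ and satisfying −f''(y) − Ṽ(y) f(y) = e f(y) for all y ∈ ℝ. Let χ : ℝ → ℝ be smooth and compactly supported, let p ∈ ℝ and let k ≥ 1 be a real number. Define ψ_k : ℝ² → ℂ by ψ_k(x,y) = k^{−1/2} e^{ipx} f(y) χ(x/k). Then ∫_{ℝ²} | −Δψ_k(x,y) − Ṽ(y) ψ_k(x,y) − (e + p²) ψ_k(x,y) |² dx dy ≤ (4p²/k²) (∫_ℝ f(y)² dy)(∫_ℝ χ'(t)² dt) + (2/k⁴) (∫_ℝ f(y)² dy)(∫_ℝ χ''(t)² dt). -/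
open MeasureTheory

/-- First classical partial derivative of a function on `ℝ²`. -/
noncomputable def pd1 (f : ℝ × ℝ → ℂ) (z : ℝ × ℝ) : ℂ :=
  deriv (fun s => f (s, z.2)) z.1

/-- Second classical partial derivative of a function on `ℝ²`. -/
noncomputable def pd2 (f : ℝ × ℝ → ℂ) (z : ℝ × ℝ) : ℂ :=
  deriv (fun t => f (z.1, t)) z.2

/-- Weyl-sequence estimate: with `f` a square-integrable `C²` solution of
`-f'' - Ṽ f = e f`, `χ` smooth and compactly supported, `p ∈ ℝ`, `k ≥ 1`, and
`ψ_k(x,y) = k^{-1/2} e^{ipx} f(y) χ(x/k)`, one has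
`∫_{ℝ²} |-Δψ_k - Ṽ(y) ψ_k - (e + p²) ψ_k|² ≤ (4p²/k²)(∫ f²)(∫ χ'²) + (2/k⁴)(∫ f²)(∫ χ''²)`. -/
theorem weyl_sequence_estimate
    (Vt : ℝ → ℝ) (e : ℝ) (f : ℝ → ℝ)
    (hf : ContDiff ℝ 2 f)
    (hfint : Integrable (fun y => f y ^ 2))
    (hode : ∀ y : ℝ, -(deriv (deriv f) y) - Vt y * f y = e * f y)
    (χ : ℝ → ℝ) (hχ : ContDiff ℝ (⊤ : ℕ∞) χ) (hχsupp : HasCompactSupport χ)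
    (p k : ℝ) (hk : 1 ≤ k)
    (ψ : ℝ × ℝ → ℂ)
    (hψ : ∀ x y : ℝ, ψ (x, y)
      = ((Real.sqrt k)⁻¹ : ℂ) * Complex.exp (Complex.I * p * x) * (f y : ℂ) * (χ (x / k) : ℂ)) :
    (∫ z : ℝ × ℝ,
        ‖-(pd1 (pd1 ψ) z + pd2 (pd2 ψ) z) - (Vt z.2 : ℂ) * ψ z - ((e + p ^ 2 : ℝ) : ℂ) * ψ z‖ ^ 2)
      ≤ 4 * p ^ 2 / k ^ 2 * ((∫ y : ℝ, f y ^ 2) * ∫ t : ℝ, (deriv χ t) ^ 2)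
        + 2 / k ^ 4 * ((∫ y : ℝ, f y ^ 2) * ∫ t : ℝ, (deriv (deriv χ) t) ^ 2) := by
  have hk0 : (0:ℝ) < k := lt_of_lt_of_le one_pos hk
  have hkne : (k:ℝ) ≠ 0 := hk0.ne'
  -- smoothness facts
  have hχ1 : ContDiff ℝ ((⊤ : ℕ∞) : WithTop ℕ∞) χ := hχ.of_le (by simp)
  have hχ'1 : ContDiff ℝ ((⊤ : ℕ∞) : WithTop ℕ∞) (deriv χ) := (contDiff_infty_iff_deriv.mp hχ1).2
  have hχ''1 : ContDiff ℝ ((⊤ : ℕ∞) : WithTop ℕ∞) (deriv (deriv χ)) :=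
    (contDiff_infty_iff_deriv.mp hχ'1).2
  have hχd : Differentiable ℝ χ := hχ.differentiable (by simp)
  have hχ'd : Differentiable ℝ (deriv χ) := (contDiff_infty_iff_deriv.mp hχ'1).1
  have hf1 : Differentiable ℝ f := hf.differentiable (by simp)
  have hf2 : ContDiff ℝ 1 (deriv f) := by
    have h2 : ContDiff ℝ ((1 : WithTop ℕ∞) + 1) f := by
      have h12 : ((1 : WithTop ℕ∞) + 1) = 2 := by norm_num
      rw [h12]; exact hf
    exact (contDiff_succ_iff_deriv.mp h2).2.2
  have hf1' : Differentiable ℝ (deriv f) := hf2.differentiable (by simp)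
  -- basic derivative facts
  have hE : ∀ x : ℝ, HasDerivAt (fun s : ℝ => Complex.exp (Complex.I * p * s))
      (Complex.I * p * Complex.exp (Complex.I * p * x)) x := by
    intro x
    have h1 : HasDerivAt (fun s : ℝ => (s : ℂ)) 1 x := by
      simpa using (hasDerivAt_id x).ofReal_comp
    simpa [mul_comm] using ((h1.const_mul (Complex.I * p)).cexp)
  have hDχ : ∀ g : ℝ → ℝ, Differentiable ℝ g → ∀ x : ℝ,
      HasDerivAt (fun s : ℝ => g (s / k)) (deriv g (x / k) * k⁻¹) x := by
    intro g hg x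
    have h0 : HasDerivAt (fun s : ℝ => s / k) k⁻¹ x := by
      simpa [div_eq_mul_inv] using (hasDerivAt_id x).mul_const k⁻¹
    exact ((hg (x / k)).hasDerivAt).comp x h0
  -- first partial derivative of ψ
  have hpd1 : ∀ x y : ℝ, pd1 ψ (x, y)
      = (((Real.sqrt k : ℝ) : ℂ)⁻¹ * (f y : ℂ)) *
        (Complex.I * p * Complex.exp (Complex.I * p * x) * (χ (x / k) : ℂ)
          + Complex.exp (Complex.I * p * x) * ((deriv χ (x / k) * k⁻¹ : ℝ) : ℂ)) := by
    intro x y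
    have hfun : (fun s : ℝ => ψ (s, y)) = fun s : ℝ =>
        (((Real.sqrt k : ℝ) : ℂ)⁻¹ * (f y : ℂ)) *
          (Complex.exp (Complex.I * p * s) * (χ (s / k) : ℂ)) := by
      funext s; rw [hψ s y]; ring
    have hΦ : HasDerivAt (fun s : ℝ => Complex.exp (Complex.I * p * s) * (χ (s / k) : ℂ))
        (Complex.I * p * Complex.exp (Complex.I * p * x) * (χ (x / k) : ℂ)
          + Complex.exp (Complex.I * p * x) * ((deriv χ (x / k) * k⁻¹ : ℝ) : ℂ)) x :=
      (hE x).mul (hDχ χ hχd x).ofReal_comp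
    show deriv (fun s : ℝ => ψ (s, y)) x = _
    rw [hfun, (hΦ.const_mul _).deriv]
  -- second x-derivative of ψ
  have hpd11 : ∀ x y : ℝ, pd1 (pd1 ψ) (x, y)
      = (((Real.sqrt k : ℝ) : ℂ)⁻¹ * (f y : ℂ)) *
        ((Complex.I * p) *
            (Complex.I * p * Complex.exp (Complex.I * p * x) * (χ (x / k) : ℂ)
              + Complex.exp (Complex.I * p * x) * ((deriv χ (x / k) * k⁻¹ : ℝ) : ℂ))
          + (Complex.I * p * Complex.exp (Complex.I * p * x) * ((deriv χ (x / k) : ℝ) : ℂ)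
              + Complex.exp (Complex.I * p * x) * ((deriv (deriv χ) (x / k) * k⁻¹ : ℝ) : ℂ))
            * ((k : ℝ) : ℂ)⁻¹) := by
    intro x y
    have hfun : (fun s : ℝ => pd1 ψ (s, y)) = fun s : ℝ =>
        (((Real.sqrt k : ℝ) : ℂ)⁻¹ * (f y : ℂ)) *
          ((Complex.I * p) * (Complex.exp (Complex.I * p * s) * (χ (s / k) : ℂ))
            + (Complex.exp (Complex.I * p * s) * ((deriv χ (s / k) : ℝ) : ℂ)) * ((k : ℝ) : ℂ)⁻¹) := by
      funext s; rw [hpd1 s y]; push_cast; ring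
    have t1 : HasDerivAt
        (fun s : ℝ => (Complex.I * p) * (Complex.exp (Complex.I * p * s) * (χ (s / k) : ℂ)))
        ((Complex.I * p) *
          (Complex.I * p * Complex.exp (Complex.I * p * x) * (χ (x / k) : ℂ)
            + Complex.exp (Complex.I * p * x) * ((deriv χ (x / k) * k⁻¹ : ℝ) : ℂ))) x :=
      ((hE x).mul (hDχ χ hχd x).ofReal_comp).const_mul _
    have t2 : HasDerivAt
        (fun s : ℝ => (Complex.exp (Complex.I * p * s) * ((deriv χ (s / k) : ℝ) : ℂ)) * ((k : ℝ) : ℂ)⁻¹)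
        ((Complex.I * p * Complex.exp (Complex.I * p * x) * ((deriv χ (x / k) : ℝ) : ℂ)
            + Complex.exp (Complex.I * p * x) * ((deriv (deriv χ) (x / k) * k⁻¹ : ℝ) : ℂ))
          * ((k : ℝ) : ℂ)⁻¹) x :=
      ((hE x).mul (hDχ (deriv χ) hχ'd x).ofReal_comp).mul_const _
    show deriv (fun s : ℝ => pd1 ψ (s, y)) x = _
    rw [hfun]; exact (((t1.add t2)).const_mul _).deriv
  -- second y-derivative of ψ
  have hpd22 : ∀ x y : ℝ, pd2 (pd2 ψ) (x, y)
      = (((Real.sqrt k : ℝ) : ℂ)⁻¹ * Complex.exp (Complex.I * p * x) * (χ (x / k) : ℂ)) *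
        ((deriv (deriv f) y : ℝ) : ℂ) := by
    intro x y
    have hpd2 : ∀ t : ℝ, pd2 ψ (x, t)
        = (((Real.sqrt k : ℝ) : ℂ)⁻¹ * Complex.exp (Complex.I * p * x) * (χ (x / k) : ℂ)) *
          ((deriv f t : ℝ) : ℂ) := by
      intro t
      have hfun : (fun u : ℝ => ψ (x, u)) = fun u : ℝ =>
          (((Real.sqrt k : ℝ) : ℂ)⁻¹ * Complex.exp (Complex.I * p * x) * (χ (x / k) : ℂ)) *
            ((f u : ℝ) : ℂ) := by
        funext u; rw [hψ x u]; ring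
      show deriv (fun u : ℝ => ψ (x, u)) t = _
      rw [hfun, ((((hf1 t).hasDerivAt).ofReal_comp).const_mul _).deriv]
    have hfun2 : (fun u : ℝ => pd2 ψ (x, u)) = fun u : ℝ =>
        (((Real.sqrt k : ℝ) : ℂ)⁻¹ * Complex.exp (Complex.I * p * x) * (χ (x / k) : ℂ)) *
          ((deriv f u : ℝ) : ℂ) := by
      funext u; rw [hpd2 u]
    show deriv (fun u : ℝ => pd2 ψ (x, u)) y = _
    rw [hfun2, ((((hf1' y).hasDerivAt).ofReal_comp).const_mul _).deriv]
  -- pointwise identity for the integrand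
  have key : ∀ z : ℝ × ℝ,
      ‖-(pd1 (pd1 ψ) z + pd2 (pd2 ψ) z) - (Vt z.2 : ℂ) * ψ z - ((e + p ^ 2 : ℝ) : ℂ) * ψ z‖ ^ 2
      = (k⁻¹ * ((2 * p * deriv χ (z.1 / k) / k) ^ 2
          + (deriv (deriv χ) (z.1 / k) / k ^ 2) ^ 2)) * f z.2 ^ 2 := by
    rintro ⟨x, y⟩
    have hode' : deriv (deriv f) y = -(Vt y * f y) - e * f y := by linarith [hode y]
    have hN : -(pd1 (pd1 ψ) (x, y) + pd2 (pd2 ψ) (x, y)) - (Vt y : ℂ) * ψ (x, y)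
          - ((e + p ^ 2 : ℝ) : ℂ) * ψ (x, y)
        = ((Real.sqrt k : ℝ) : ℂ)⁻¹ * Complex.exp (Complex.I * p * x) * (f y : ℂ) *
          (((-(deriv (deriv χ) (x / k) / k ^ 2) : ℝ) : ℂ)
            + ((-(2 * p * deriv χ (x / k) / k) : ℝ) : ℂ) * Complex.I) := by
      rw [hpd11 x y, hpd22 x y, hψ x y, hode']
      push_cast
      linear_combination (-(((Real.sqrt k : ℝ) : ℂ)⁻¹) * (f y : ℂ) *
        Complex.exp (Complex.I * p * x) * (χ (x / k) : ℂ) * (p : ℂ) ^ 2) * Complex.I_sq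
    show ‖-(pd1 (pd1 ψ) (x, y) + pd2 (pd2 ψ) (x, y)) - (Vt y : ℂ) * ψ (x, y)
        - ((e + p ^ 2 : ℝ) : ℂ) * ψ (x, y)‖ ^ 2 = _
    rw [hN]
    rw [norm_mul, norm_mul, norm_mul, mul_pow, mul_pow, mul_pow]
    have h1 : ‖(((Real.sqrt k : ℝ) : ℂ))⁻¹‖ ^ 2 = k⁻¹ := by
      rw [norm_inv, Complex.norm_real, Real.norm_eq_abs, abs_of_nonneg (Real.sqrt_nonneg k)]
      rw [inv_pow, Real.sq_sqrt hk0.le]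
    have h2 : ‖Complex.exp (Complex.I * p * x)‖ ^ 2 = 1 := by
      rw [Complex.norm_exp]
      have : (Complex.I * p * x).re = 0 := by simp
      rw [this, Real.exp_zero, one_pow]
    have h3 : ‖((f y : ℝ) : ℂ)‖ ^ 2 = f y ^ 2 := by
      rw [Complex.norm_real, Real.norm_eq_abs, sq_abs]
    have h4 : ‖(((-(deriv (deriv χ) (x / k) / k ^ 2) : ℝ) : ℂ)
        + ((-(2 * p * deriv χ (x / k) / k) : ℝ) : ℂ) * Complex.I)‖ ^ 2
        = (2 * p * deriv χ (x / k) / k) ^ 2 + (deriv (deriv χ) (x / k) / k ^ 2) ^ 2 := by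
      rw [Complex.sq_norm, Complex.normSq_add_mul_I]
      ring
    rw [h1, h2, h3, h4]
    ring
  -- product structure of the integral
  have hsplit : (∫ z : ℝ × ℝ,
        ‖-(pd1 (pd1 ψ) z + pd2 (pd2 ψ) z) - (Vt z.2 : ℂ) * ψ z - ((e + p ^ 2 : ℝ) : ℂ) * ψ z‖ ^ 2)
      = (∫ x : ℝ, k⁻¹ * ((2 * p * deriv χ (x / k) / k) ^ 2
            + (deriv (deriv χ) (x / k) / k ^ 2) ^ 2)) * ∫ y : ℝ, f y ^ 2 := by
    rw [integral_congr_ae (Filter.Eventually.of_forall key)]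
    rw [Measure.volume_eq_prod]
    exact integral_prod_mul
      (fun x : ℝ => k⁻¹ * ((2 * p * deriv χ (x / k) / k) ^ 2
        + (deriv (deriv χ) (x / k) / k ^ 2) ^ 2))
      (fun y : ℝ => f y ^ 2)
  -- integrability of the pieces
  have hint : ∀ g : ℝ → ℝ, ContDiff ℝ ((⊤ : ℕ∞) : WithTop ℕ∞) g → HasCompactSupport g →
      Integrable (fun x : ℝ => (g (x / k)) ^ 2) := by
    intro g hg hgs
    have hcs : HasCompactSupport (fun t : ℝ => (g t) ^ 2) :=
      hgs.comp_left (g := fun r : ℝ => r ^ 2) (by simp)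
    have hcs2 : HasCompactSupport (fun x : ℝ => (g (x / k)) ^ 2) := by
      have := hcs.comp_homeomorph (Homeomorph.mulRight₀ k⁻¹ (inv_ne_zero hkne))
      simpa [Function.comp_def, div_eq_mul_inv] using this
    exact ((hg.continuous.comp (continuous_id.div_const k)).pow 2).integrable_of_hasCompactSupport
      hcs2
  have hi1 : Integrable (fun x : ℝ => (deriv χ (x / k)) ^ 2) := hint _ hχ'1 hχsupp.deriv
  have hi2 : Integrable (fun x : ℝ => (deriv (deriv χ) (x / k)) ^ 2) :=
    hint _ hχ''1 hχsupp.deriv.deriv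
  -- compute the x-integral
  have hH : (∫ x : ℝ, k⁻¹ * ((2 * p * deriv χ (x / k) / k) ^ 2
        + (deriv (deriv χ) (x / k) / k ^ 2) ^ 2))
      = 4 * p ^ 2 / k ^ 2 * (∫ t : ℝ, (deriv χ t) ^ 2)
        + 1 / k ^ 4 * ∫ t : ℝ, (deriv (deriv χ) t) ^ 2 := by
    have hfun : (fun x : ℝ => k⁻¹ * ((2 * p * deriv χ (x / k) / k) ^ 2
        + (deriv (deriv χ) (x / k) / k ^ 2) ^ 2))
        = fun x : ℝ => (4 * p ^ 2 / k ^ 3) * (deriv χ (x / k)) ^ 2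
          + (1 / k ^ 5) * (deriv (deriv χ) (x / k)) ^ 2 := by
      funext x; field_simp; ring
    rw [hfun, integral_add (hi1.const_mul _) (hi2.const_mul _), integral_const_mul,
      integral_const_mul,
      show (∫ x : ℝ, (deriv χ (x / k)) ^ 2) = |k| • ∫ t : ℝ, (deriv χ t) ^ 2 from
        Measure.integral_comp_div (fun t => (deriv χ t) ^ 2) k,
      show (∫ x : ℝ, (deriv (deriv χ) (x / k)) ^ 2) = |k| • ∫ t : ℝ, (deriv (deriv χ) t) ^ 2 from
        Measure.integral_comp_div (fun t => (deriv (deriv χ) t) ^ 2) k,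
      abs_of_pos hk0, smul_eq_mul, smul_eq_mul]
    field_simp
  rw [hsplit, hH]
  have hF : 0 ≤ ∫ y : ℝ, f y ^ 2 := integral_nonneg fun y => sq_nonneg _
  have hB : 0 ≤ ∫ t : ℝ, (deriv (deriv χ) t) ^ 2 := integral_nonneg fun t => sq_nonneg _
  have expand : 4 * p ^ 2 / k ^ 2 * ((∫ y : ℝ, f y ^ 2) * ∫ t : ℝ, (deriv χ t) ^ 2)
      + 2 / k ^ 4 * ((∫ y : ℝ, f y ^ 2) * ∫ t : ℝ, (deriv (deriv χ) t) ^ 2)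
      - (4 * p ^ 2 / k ^ 2 * (∫ t : ℝ, (deriv χ t) ^ 2)
          + 1 / k ^ 4 * ∫ t : ℝ, (deriv (deriv χ) t) ^ 2) * (∫ y : ℝ, f y ^ 2)
      = 1 / k ^ 4 * ((∫ y : ℝ, f y ^ 2) * ∫ t : ℝ, (deriv (deriv χ) t) ^ 2) := by ring
  have hnn : 0 ≤ 1 / k ^ 4 * ((∫ y : ℝ, f y ^ 2) * ∫ t : ℝ, (deriv (deriv χ) t) ^ 2) :=
    mul_nonneg (by positivity) (mul_nonneg hF hB)
  linarith [expand, hnn]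
end

section
/- Let B : ℝ² → ℝ be continuous, and define the Landau-gauge potential A₁(x,y) = −∫_0^y B(x,t) dt. Let Ṽ : ℝ → ℝ be continuous and bounded, let e ∈ ℝ, and let g : ℝ → ℝ be twice continuously differentiable with −g''(y) − Ṽ(y) g(y) = e g(y) for all y ∈ ℝ. Let V : ℝ² → ℝ be measurable and locally bounded. Then for every smooth compactly supported φ : ℝ² → ℂ, setting ψ(x,y) = φ(x,y) g(y), one has the identity ∫_{ℝ²} ( |i ∂_x ψ + A₁ ψ|² + |∂_y ψ|² − V |ψ|² ) dx dy = ∫_{ℝ²} |i ∂_x φ + A₁ φ|² g(y)² dx dy + ∫_{ℝ²} |∂_y φ|² g(y)² dx dy + ∫_{ℝ²} ( Ṽ(y) − V(x,y) ) g(y)² |φ(x,y)|² dx dy + e ∫_{ℝ²} g(y)² |φ(x,y)|² dx dy. -/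
open MeasureTheory

private lemma nsq_aux (u : ℂ) : ‖u‖ ^ 2 = u.re ^ 2 + u.im ^ 2 := by
  rw [Complex.sq_norm, Complex.normSq_apply]; ring

/-- Ground-state representation of the magnetic Schrödinger quadratic form
in the Landau gauge `A₁(x,y) = -∫_0^y B(x,t) dt`: for `g` a `C²` solution of
`-g'' - Ṽ g = e g` and `ψ = φ·g(y)` with `φ` smooth compactly supported,
`∫ (|i∂ₓψ + A₁ψ|² + |∂_yψ|² - V|ψ|²)
  = ∫ |i∂ₓφ + A₁φ|² g² + ∫ |∂_yφ|² g² + ∫ (Ṽ(y) - V) g² |φ|² + e ∫ g² |φ|²`. -/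
theorem ground_state_representation
    (B : ℝ × ℝ → ℝ) (hB : Continuous B)
    (A₁ : ℝ × ℝ → ℝ) (hA₁ : ∀ x y : ℝ, A₁ (x, y) = -∫ t in (0:ℝ)..y, B (x, t))
    (Vt : ℝ → ℝ) (hVt : Continuous Vt) (hVtbdd : ∃ C : ℝ, ∀ y : ℝ, |Vt y| ≤ C)
    (e : ℝ) (g : ℝ → ℝ) (hg : ContDiff ℝ 2 g)
    (hode : ∀ y : ℝ, -(deriv (deriv g) y) - Vt y * g y = e * g y)
    (V : ℝ × ℝ → ℝ) (hVmeas : Measurable V)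
    (hVloc : ∀ K : Set (ℝ × ℝ), IsCompact K → ∃ C : ℝ, ∀ z ∈ K, |V z| ≤ C)
    (φ : ℝ × ℝ → ℂ) (hφ : ContDiff ℝ (⊤ : ℕ∞) φ) (hφsupp : HasCompactSupport φ)
    (ψ : ℝ × ℝ → ℂ) (hψ : ∀ x y : ℝ, ψ (x, y) = φ (x, y) * (g y : ℂ)) :
    (∫ z : ℝ × ℝ,
        (‖Complex.I * pd1 ψ z + (A₁ z : ℂ) * ψ z‖ ^ 2 + ‖pd2 ψ z‖ ^ 2 - V z * ‖ψ z‖ ^ 2))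
      = (∫ z : ℝ × ℝ, ‖Complex.I * pd1 φ z + (A₁ z : ℂ) * φ z‖ ^ 2 * g z.2 ^ 2)
        + (∫ z : ℝ × ℝ, ‖pd2 φ z‖ ^ 2 * g z.2 ^ 2)
        + (∫ z : ℝ × ℝ, (Vt z.2 - V z) * g z.2 ^ 2 * ‖φ z‖ ^ 2)
        + e * ∫ z : ℝ × ℝ, g z.2 ^ 2 * ‖φ z‖ ^ 2 := by
  -- basic regularity facts
  have hφd : Differentiable ℝ φ := hφ.differentiable (by simp)
  have hφc : Continuous φ := hφ.continuous
  have hgd : Differentiable ℝ g := hg.differentiable (by norm_num)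
  have hg1 : ContDiff ℝ 1 (deriv g) := by
    have h2 : ContDiff ℝ ((1 : ℕ) + (1 : ℕ) : ℕ) g := by exact_mod_cast hg
    simpa using h2.iterate_deriv' 1 1
  have hg'd : Differentiable ℝ (deriv g) := hg1.differentiable (by norm_num)
  have hgc : Continuous g := hg.continuous
  have hg'c : Continuous (deriv g) := hg1.continuous
  have hg''c : Continuous (deriv (deriv g)) := hg1.continuous_deriv le_rfl
  -- slices
  have hs1 : ∀ y : ℝ, Differentiable ℝ (fun s => φ (s, y)) := fun y =>
    hφd.comp (differentiable_id.prodMk (differentiable_const y))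
  have hs2 : ∀ x : ℝ, Differentiable ℝ (fun t => φ (x, t)) := fun x =>
    hφd.comp ((differentiable_const x).prodMk differentiable_id)
  have hpd2 : ∀ z : ℝ × ℝ, HasDerivAt (fun t => φ (z.1, t)) (pd2 φ z) z.2 := fun z =>
    ((hs2 z.1) z.2).hasDerivAt
  -- fderiv representations
  have hpd1_fd : ∀ z : ℝ × ℝ, pd1 φ z = fderiv ℝ φ z ((1 : ℝ), (0 : ℝ)) := by
    intro z
    have hcurve : HasDerivAt (fun s => ((s, z.2) : ℝ × ℝ)) ((1 : ℝ), (0 : ℝ)) z.1 :=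
      (hasDerivAt_id z.1).prodMk (hasDerivAt_const z.1 z.2)
    exact ((hφd (z.1, z.2)).hasFDerivAt.comp_hasDerivAt z.1 hcurve).deriv
  have hpd2_fd : ∀ z : ℝ × ℝ, pd2 φ z = fderiv ℝ φ z ((0 : ℝ), (1 : ℝ)) := by
    intro z
    have hcurve : HasDerivAt (fun t => ((z.1, t) : ℝ × ℝ)) ((0 : ℝ), (1 : ℝ)) z.2 :=
      (hasDerivAt_const z.2 z.1).prodMk (hasDerivAt_id z.2)
    exact ((hφd (z.1, z.2)).hasFDerivAt.comp_hasDerivAt z.2 hcurve).deriv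
  have hfd0 : ∀ z ∉ tsupport φ, fderiv ℝ φ z = 0 := by
    intro z hz
    by_contra h
    exact hz (support_fderiv_subset ℝ (by simpa [Function.mem_support] using h))
  have hpd1c : Continuous (pd1 φ) := by
    rw [funext hpd1_fd]
    exact (hφ.continuous_fderiv (by simp)).clm_apply continuous_const
  have hpd2c : Continuous (pd2 φ) := by
    rw [funext hpd2_fd]
    exact (hφ.continuous_fderiv (by simp)).clm_apply continuous_const
  have hpd1s : ∀ z ∉ tsupport φ, pd1 φ z = 0 := by
    intro z hz; rw [hpd1_fd z, hfd0 z hz]; simp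
  have hpd2s : ∀ z ∉ tsupport φ, pd2 φ z = 0 := by
    intro z hz; rw [hpd2_fd z, hfd0 z hz]; simp
  have hφ0 : ∀ z ∉ tsupport φ, φ z = 0 := fun z hz => image_eq_zero_of_notMem_tsupport hz
  -- ψ formulas
  have hψval : ∀ z : ℝ × ℝ, ψ z = φ z * (g z.2 : ℂ) := fun z => hψ z.1 z.2
  have hψ1 : ∀ z : ℝ × ℝ, pd1 ψ z = pd1 φ z * (g z.2 : ℂ) := by
    intro z
    have heq : (fun s => ψ (s, z.2)) = fun s => φ (s, z.2) * (g z.2 : ℂ) :=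
      funext fun s => hψ s z.2
    show deriv (fun s => ψ (s, z.2)) z.1 = _
    rw [heq, deriv_mul_const ((hs1 z.2) z.1)]
    rfl
  have hψ2 : ∀ z : ℝ × ℝ, pd2 ψ z = pd2 φ z * (g z.2 : ℂ) + φ z * ((deriv g z.2 : ℝ) : ℂ) := by
    intro z
    have hgC : HasDerivAt (fun t => ((g t : ℝ) : ℂ)) ((deriv g z.2 : ℝ) : ℂ) z.2 :=
      ((hgd z.2).hasDerivAt).ofReal_comp
    have hmul := (hpd2 z).mul hgC
    have heq : (fun t => ψ (z.1, t)) = fun t => φ (z.1, t) * (g t : ℂ) :=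
      funext fun t => hψ z.1 t
    show deriv (fun t => ψ (z.1, t)) z.2 = _
    rw [heq]; exact hmul.deriv
  -- derivative of the norm-square slice
  have hN : ∀ x y : ℝ, HasDerivAt (fun t => ‖φ (x, t)‖ ^ 2)
      (2 * ((starRingEnd ℂ) (φ (x, y)) * pd2 φ (x, y)).re) y := by
    intro x y
    have h := hpd2 (x, y)
    have hre : HasDerivAt (fun t => (φ (x, t)).re) (pd2 φ (x, y)).re y :=
      Complex.reCLM.hasFDerivAt.comp_hasDerivAt y h
    have him : HasDerivAt (fun t => (φ (x, t)).im) (pd2 φ (x, y)).im y :=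
      Complex.imCLM.hasFDerivAt.comp_hasDerivAt y h
    have heq : (fun t => ‖φ (x, t)‖ ^ 2) = fun t => (φ (x, t)).re ^ 2 + (φ (x, t)).im ^ 2 :=
      funext fun t => nsq_aux _
    rw [heq]
    have h2 := (hre.pow 2).add (him.pow 2)
    refine h2.congr_deriv ?_
    simp [Complex.mul_re, Complex.conj_re, Complex.conj_im]
    ring
  -- the exact-derivative term K
  set K : ℝ × ℝ → ℝ := fun z =>
    (deriv g z.2 ^ 2 + g z.2 * deriv (deriv g) z.2) * ‖φ z‖ ^ 2
      + g z.2 * deriv g z.2 * (2 * ((starRingEnd ℂ) (φ z) * pd2 φ z).re) with hKdef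
  have hH : ∀ x y : ℝ, HasDerivAt (fun t => g t * deriv g t * ‖φ (x, t)‖ ^ 2) (K (x, y)) y := by
    intro x y
    have h1 : HasDerivAt (fun t => g t * deriv g t)
        (deriv g y * deriv g y + g y * deriv (deriv g) y) y :=
      ((hgd y).hasDerivAt).mul ((hg'd y).hasDerivAt)
    have h := h1.mul (hN x y)
    refine h.congr_deriv ?_
    simp only [hKdef]
    ring
  have hKcont : Continuous K := by
    have h1 : Continuous fun z : ℝ × ℝ => ((starRingEnd ℂ) (φ z) * pd2 φ z).re :=
      Complex.continuous_re.comp ((Complex.continuous_conj.comp hφc).mul hpd2c)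
    apply Continuous.add
    · exact (((hg'c.comp continuous_snd).pow 2).add
        ((hgc.comp continuous_snd).mul (hg''c.comp continuous_snd))).mul (hφc.norm.pow 2)
    · exact ((hgc.comp continuous_snd).mul (hg'c.comp continuous_snd)).mul
        (continuous_const.mul h1)
  have hKsupp : HasCompactSupport K := by
    apply HasCompactSupport.intro hφsupp
    intro z hz
    simp [hKdef, hφ0 z hz]
  have hKint : Integrable K := hKcont.integrable_of_hasCompactSupport hKsupp
  -- ∫ K = 0 by Fubini and FTC
  have hKzero : (∫ z : ℝ × ℝ, K z) = 0 := by
    rw [Measure.volume_eq_prod, integral_prod _ (by rwa [← Measure.volume_eq_prod])]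
    have hxzero : ∀ x : ℝ, (∫ y : ℝ, K (x, y)) = 0 := by
      intro x
      set H : ℝ → ℝ := fun t => g t * deriv g t * ‖φ (x, t)‖ ^ 2 with hHdef
      have hHc : ContDiff ℝ 1 H := by
        have hslice : ContDiff ℝ 1 fun t => φ (x, t) :=
          (hφ.comp (contDiff_const.prodMk contDiff_id)).of_le (by simp)
        have hn : ContDiff ℝ 1 fun t => ‖φ (x, t)‖ ^ 2 := by
          have heq : (fun t => ‖φ (x, t)‖ ^ 2)
              = fun t => (φ (x, t)).re ^ 2 + (φ (x, t)).im ^ 2 := funext fun t => nsq_aux _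
          rw [heq]
          exact ((Complex.reCLM.contDiff.comp hslice).pow 2).add
            ((Complex.imCLM.contDiff.comp hslice).pow 2)
        exact ((hg.of_le (by norm_num)).mul hg1).mul hn
      have hHsupp : HasCompactSupport H := by
        apply HasCompactSupport.intro (hφsupp.image continuous_snd)
        intro y hy
        have h0 : φ (x, y) = 0 := image_eq_zero_of_notMem_tsupport fun h => hy ⟨(x, y), h, rfl⟩
        simp [hHdef, h0]
      have hderiv_eq : ∀ y : ℝ, deriv H y = K (x, y) := fun y => (hH x y).deriv
      have hKxint : Integrable (fun y => K (x, y)) := by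
        apply Continuous.integrable_of_hasCompactSupport
        · exact hKcont.comp (Continuous.prodMk_right x)
        · apply HasCompactSupport.intro (hφsupp.image continuous_snd)
          intro y hy
          have h0 : φ (x, y) = 0 := image_eq_zero_of_notMem_tsupport fun h => hy ⟨(x, y), h, rfl⟩
          simp [hKdef, h0]
      have hsplit := intervalIntegral.integral_Iic_add_Ioi (b := (0:ℝ))
        (hKxint.integrableOn) (hKxint.integrableOn)
      rw [← hsplit]
      have e1 : (∫ y in Set.Iic (0:ℝ), K (x, y)) = H 0 := by
        rw [show (fun y => K (x, y)) = deriv H from funext fun y => (hderiv_eq y).symm]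
        exact HasCompactSupport.integral_Iic_deriv_eq hHc hHsupp 0
      have e2 : (∫ y in Set.Ioi (0:ℝ), K (x, y)) = -H 0 := by
        rw [show (fun y => K (x, y)) = deriv H from funext fun y => (hderiv_eq y).symm]
        exact HasCompactSupport.integral_Ioi_deriv_eq hHc hHsupp 0
      rw [e1, e2]; ring
    simp [hxzero]
  -- continuity of A₁
  have hA₁c : Continuous A₁ := by
    have : A₁ = fun z : ℝ × ℝ => -∫ t in (0:ℝ)..z.2, B (z.1, t) := funext fun z => hA₁ z.1 z.2
    rw [this]
    exact (intervalIntegral.continuous_parametric_primitive_of_continuous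
      (f := fun x t => B (x, t)) (μ := volume) (a₀ := 0) hB).neg
  -- integrands on the right-hand side
  set f₁ : ℝ × ℝ → ℝ := fun z => ‖Complex.I * pd1 φ z + (A₁ z : ℂ) * φ z‖ ^ 2 * g z.2 ^ 2
    with hf₁def
  set f₂ : ℝ × ℝ → ℝ := fun z => ‖pd2 φ z‖ ^ 2 * g z.2 ^ 2 with hf₂def
  set f₃ : ℝ × ℝ → ℝ := fun z => (Vt z.2 - V z) * g z.2 ^ 2 * ‖φ z‖ ^ 2 with hf₃def
  set f₄ : ℝ × ℝ → ℝ := fun z => g z.2 ^ 2 * ‖φ z‖ ^ 2 with hf₄def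
  have hint1 : Integrable f₁ := by
    apply Continuous.integrable_of_hasCompactSupport
    · exact (((continuous_const.mul hpd1c).add
        ((Complex.continuous_ofReal.comp hA₁c).mul hφc)).norm.pow 2).mul
        ((hgc.comp continuous_snd).pow 2)
    · apply HasCompactSupport.intro hφsupp
      intro z hz
      simp [hf₁def, hpd1s z hz, hφ0 z hz]
  have hint2 : Integrable f₂ := by
    apply Continuous.integrable_of_hasCompactSupport
    · exact (hpd2c.norm.pow 2).mul ((hgc.comp continuous_snd).pow 2)
    · apply HasCompactSupport.intro hφsupp
      intro z hz
      simp [hf₂def, hpd2s z hz]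
  have hint4 : Integrable f₄ := by
    apply Continuous.integrable_of_hasCompactSupport
    · exact ((hgc.comp continuous_snd).pow 2).mul (hφc.norm.pow 2)
    · apply HasCompactSupport.intro hφsupp
      intro z hz
      simp [hf₄def, hφ0 z hz]
  have hf₄c : Continuous f₄ := ((hgc.comp continuous_snd).pow 2).mul (hφc.norm.pow 2)
  have hf₄supp : HasCompactSupport f₄ := by
    apply HasCompactSupport.intro hφsupp
    intro z hz
    simp [hf₄def, hφ0 z hz]
  -- integrability of the V-part
  have hint3 : Integrable f₃ := by
    have hI1 : Integrable (fun z : ℝ × ℝ => Vt z.2 * f₄ z) := by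
      apply Continuous.integrable_of_hasCompactSupport
      · exact (hVt.comp continuous_snd).mul hf₄c
      · apply HasCompactSupport.intro hφsupp
        intro z hz
        simp [hf₄def, hφ0 z hz]
    have hI2 : Integrable (fun z : ℝ × ℝ => V z * f₄ z) := by
      obtain ⟨C, hC⟩ := hVloc (tsupport φ) hφsupp
      obtain ⟨M, hM⟩ := hf₄c.bounded_above_of_compact_support hf₄supp
      set C' := max C 0 with hC'def
      set M' := max M 0 with hM'def
      have hmeas : AEStronglyMeasurable (fun z : ℝ × ℝ => V z * f₄ z) volume :=
        (hVmeas.aemeasurable.mul hf₄c.measurable.aemeasurable).aestronglyMeasurable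
      have hdom : Integrable ((tsupport φ).indicator fun _ : ℝ × ℝ => C' * M') := by
        rw [integrable_indicator_iff (isClosed_tsupport φ).measurableSet]
        exact integrableOn_const hφsupp.measure_lt_top.ne
      apply hdom.mono' hmeas
      filter_upwards with z
      by_cases hz : z ∈ tsupport φ
      · rw [Set.indicator_of_mem hz]
        have h1 : |V z| ≤ C' := le_trans (hC z hz) (le_max_left _ _)
        have h2 : |f₄ z| ≤ M' := by
          rw [abs_of_nonneg (by positivity)]
          exact le_trans (le_trans (le_abs_self _) (hM z)) (le_max_left _ _)
        calc ‖V z * f₄ z‖ = |V z| * |f₄ z| := abs_mul _ _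
          _ ≤ C' * M' := mul_le_mul h1 h2 (abs_nonneg _) (le_max_right _ _)
      · rw [Set.indicator_of_notMem hz]
        have h0 : φ z = 0 := hφ0 z hz
        simp [hf₄def, h0]
    have heq : f₃ = fun z => Vt z.2 * f₄ z - V z * f₄ z := by
      funext z; simp only [hf₃def, hf₄def]; ring
    rw [heq]
    exact hI1.sub hI2
  -- pointwise identity
  have hpoint : ∀ z : ℝ × ℝ,
      ‖Complex.I * pd1 ψ z + (A₁ z : ℂ) * ψ z‖ ^ 2 + ‖pd2 ψ z‖ ^ 2 - V z * ‖ψ z‖ ^ 2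
        = f₁ z + (f₂ z + (f₃ z + (e * f₄ z + K z))) := by
    intro z
    rw [hψ1 z, hψ2 z, hψval z]
    have hode' : deriv (deriv g) z.2 = -(Vt z.2 * g z.2) - e * g z.2 := by
      have := hode z.2; linarith
    simp only [hf₁def, hf₂def, hf₃def, hf₄def, hKdef, hode']
    simp only [nsq_aux, Complex.add_re, Complex.add_im, Complex.mul_re, Complex.mul_im,
      Complex.I_re, Complex.I_im, Complex.ofReal_re, Complex.ofReal_im,
      Complex.conj_re, Complex.conj_im]
    ring
  -- assemble
  calc (∫ z : ℝ × ℝ,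
        (‖Complex.I * pd1 ψ z + (A₁ z : ℂ) * ψ z‖ ^ 2 + ‖pd2 ψ z‖ ^ 2 - V z * ‖ψ z‖ ^ 2))
      = ∫ z : ℝ × ℝ, (f₁ z + (f₂ z + (f₃ z + (e * f₄ z + K z)))) :=
        integral_congr_ae (Filter.Eventually.of_forall hpoint)
    _ = (∫ z : ℝ × ℝ, f₁ z) + ((∫ z : ℝ × ℝ, f₂ z) + ((∫ z : ℝ × ℝ, f₃ z)
          + ((∫ z : ℝ × ℝ, e * f₄ z) + ∫ z : ℝ × ℝ, K z))) := by
        have h4K : Integrable (fun z : ℝ × ℝ => e * f₄ z + K z) :=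
          (hint4.const_mul e).add hKint
        have h34K : Integrable (fun z : ℝ × ℝ => f₃ z + (e * f₄ z + K z)) := hint3.add h4K
        have h234K : Integrable (fun z : ℝ × ℝ => f₂ z + (f₃ z + (e * f₄ z + K z))) :=
          hint2.add h34K
        rw [integral_add hint1 h234K, integral_add hint2 h34K, integral_add hint3 h4K,
          integral_add (hint4.const_mul e) hKint]
    _ = (∫ z : ℝ × ℝ, f₁ z) + (∫ z : ℝ × ℝ, f₂ z) + (∫ z : ℝ × ℝ, f₃ z)
          + e * ∫ z : ℝ × ℝ, f₄ z := by
        rw [hKzero, integral_const_mul]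
        ring
end

section
/- Let 0 < c < τ, and let γ₁, γ₂ : [−c,c] → ℝ be continuous functions with −√(τ²−x²) ≤ γ₁(x) ≤ γ₂(x) ≤ √(τ²−x²) for all x ∈ [−c,c]. Set δ = sup_{x∈[−c,c]} (γ₂(x) − γ₁(x)). Then for every smooth compactly supported φ : ℝ² → ℂ one has ∫_{−c}^{c} ∫_{γ₁(x)}^{γ₂(x)} |φ(x,y)|² dy dx ≤ 4τδ ∫_{B(0,τ)} |∂_y φ(x,y)|² dx dy + (δ/√(τ²−c²)) ∫_{B(0,τ)} |φ(x,y)|² dx dy. -/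
open MeasureTheory

lemma hasDerivAt_slice {φ : ℝ × ℝ → ℂ} (hφ : ContDiff ℝ (⊤ : ℕ∞) φ) (x y : ℝ) :
    HasDerivAt (fun t => φ (x, t)) (pd2 φ (x, y)) y := by
  have hd : DifferentiableAt ℝ (fun t : ℝ => φ (x, t)) y :=
    ((hφ.differentiable (by simp)) (x, y)).comp y
      ((differentiableAt_const x).prodMk differentiableAt_id)
  simpa [pd2] using hd.hasDerivAt

lemma pd2_eq_fderiv {φ : ℝ × ℝ → ℂ} (hφ : ContDiff ℝ (⊤ : ℕ∞) φ) (z : ℝ × ℝ) :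
    pd2 φ z = fderiv ℝ φ z (0, 1) := by
  have h1 : HasFDerivAt φ (fderiv ℝ φ z) z := ((hφ.differentiable (by simp)) z).hasFDerivAt
  have h2 : HasDerivAt (fun t : ℝ => ((z.1 : ℝ), t)) ((0 : ℝ), (1 : ℝ)) z.2 :=
    HasDerivAt.prodMk (hasDerivAt_const z.2 z.1) (hasDerivAt_id z.2)
  exact (h1.comp_hasDerivAt z.2 h2).deriv

lemma pd2_continuous {φ : ℝ × ℝ → ℂ} (hφ : ContDiff ℝ (⊤ : ℕ∞) φ) : Continuous (pd2 φ) := by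
  have h : Continuous fun z : ℝ × ℝ => fderiv ℝ φ z (0, 1) :=
    (ContinuousLinearMap.apply ℝ ℂ ((0:ℝ), (1:ℝ))).continuous.comp
      (hφ.continuous_fderiv (by simp))
  exact h.congr fun z => (pd2_eq_fderiv hφ z).symm

lemma pd2_compactSupport {φ : ℝ × ℝ → ℂ} (hφ : ContDiff ℝ (⊤ : ℕ∞) φ)
    (hs : HasCompactSupport φ) : HasCompactSupport (pd2 φ) := by
  have h := hs.fderiv_apply (𝕜 := ℝ) ((0:ℝ), (1:ℝ))
  exact h.mono' (by
    intro z hz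
    simp only [Function.mem_support, ne_eq] at hz
    rw [pd2_eq_fderiv hφ] at hz
    have : z ∈ Function.support fun x => (fderiv ℝ φ x) (0, 1) := hz
    exact subset_tsupport _ hz)

lemma slice_bound {f f' : ℝ → ℂ} (hf : Continuous f) (hf' : Continuous f')
    (hd : ∀ t, HasDerivAt f (f' t) t) {h : ℝ} (hh : 0 < h)
    {y : ℝ} (hy : y ∈ Set.Icc (-h) h) :
    ‖f y‖ ^ 2 ≤ (1 / h) * (∫ t in (-h)..h, ‖f t‖ ^ 2)
      + 2 * h * ∫ t in (-h)..h, ‖f' t‖ ^ 2 := by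
  set v' : ℝ → ℝ := fun t => (inner ℝ (f t) (f' t) : ℝ) + (inner ℝ (f' t) (f t) : ℝ) with hv'def
  have hv : ∀ t, HasDerivAt (fun s => (inner ℝ (f s) (f s) : ℝ)) (v' t) t :=
    fun t => (hd t).inner ℝ (hd t)
  have hv'cont : Continuous v' := (hf.inner hf').add (hf'.inner hf)
  have hbcont : Continuous fun t => 2 * ‖f t‖ * ‖f' t‖ := by fun_prop
  have hbd : ∀ t, v' t ≤ 2 * ‖f t‖ * ‖f' t‖ ∧ -(v' t) ≤ 2 * ‖f t‖ * ‖f' t‖ := by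
    intro t
    have h1' := abs_le.mp (abs_real_inner_le_norm (f t) (f' t))
    have h2' := abs_le.mp (abs_real_inner_le_norm (f' t) (f t))
    constructor <;> simp only [hv'def] <;> nlinarith [norm_nonneg (f t), norm_nonneg (f' t)]
  set K : ℝ := ∫ t in (-h)..h, 2 * ‖f t‖ * ‖f' t‖ with hKdef
  have hbpos : ∀ t : ℝ, (0:ℝ) ≤ (fun t => 2 * ‖f t‖ * ‖f' t‖) t := by
    intro t; dsimp; positivity
  have claim : ∀ a b, a ∈ Set.Icc (-h) h → b ∈ Set.Icc (-h) h →
      (inner ℝ (f b) (f b) : ℝ) - (inner ℝ (f a) (f a) : ℝ) ≤ K := by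
    intro a b ha hb
    rcases le_total a b with hab | hab
    · have ftc : ∫ t in a..b, v' t = (inner ℝ (f b) (f b) : ℝ) - (inner ℝ (f a) (f a) : ℝ) :=
        intervalIntegral.integral_eq_sub_of_hasDerivAt (fun t _ => hv t)
          (hv'cont.intervalIntegrable a b)
      rw [← ftc]
      calc ∫ t in a..b, v' t ≤ ∫ t in a..b, 2 * ‖f t‖ * ‖f' t‖ :=
            intervalIntegral.integral_mono_on hab (hv'cont.intervalIntegrable a b)
              (hbcont.intervalIntegrable a b) (fun t _ => (hbd t).1)
        _ ≤ K := intervalIntegral.integral_mono_interval ha.1 hab hb.2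
            (Filter.Eventually.of_forall hbpos) (hbcont.intervalIntegrable _ _)
    · have ftc : ∫ t in b..a, v' t = (inner ℝ (f a) (f a) : ℝ) - (inner ℝ (f b) (f b) : ℝ) :=
        intervalIntegral.integral_eq_sub_of_hasDerivAt (fun t _ => hv t)
          (hv'cont.intervalIntegrable b a)
      have heq : (inner ℝ (f b) (f b) : ℝ) - (inner ℝ (f a) (f a) : ℝ) = ∫ t in b..a, -(v' t) := by
        rw [intervalIntegral.integral_neg, ftc]; ring
      rw [heq]
      calc ∫ t in b..a, -(v' t) ≤ ∫ t in b..a, 2 * ‖f t‖ * ‖f' t‖ :=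
            intervalIntegral.integral_mono_on hab ((hv'cont.neg).intervalIntegrable b a)
              (hbcont.intervalIntegrable b a) (fun t _ => (hbd t).2)
        _ ≤ K := intervalIntegral.integral_mono_interval hb.1 hab ha.2
            (Filter.Eventually.of_forall hbpos) (hbcont.intervalIntegrable _ _)
  have step2 : ∀ y' ∈ Set.Icc (-h) h, ‖f y‖ ^ 2 ≤ ‖f y'‖ ^ 2 + K := by
    intro y' hy'
    have := claim y' y hy' hy
    rw [real_inner_self_eq_norm_sq, real_inner_self_eq_norm_sq] at this
    linarith
  have hfc2 : Continuous fun t => ‖f t‖ ^ 2 := by fun_prop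
  have hfc2' : Continuous fun t => ‖f' t‖ ^ 2 := by fun_prop
  set I1 : ℝ := ∫ t in (-h)..h, ‖f t‖ ^ 2 with hI1
  set I2 : ℝ := ∫ t in (-h)..h, ‖f' t‖ ^ 2 with hI2
  have hhh : -h ≤ h := by linarith
  have step3 : (2 * h) * ‖f y‖ ^ 2 ≤ I1 + (2 * h) * K := by
    have hmono := intervalIntegral.integral_mono_on (μ := volume) hhh
      (intervalIntegrable_const (c := ‖f y‖ ^ 2))
      ((hfc2.add continuous_const).intervalIntegrable _ _)
      (fun y' hy' => step2 y' hy')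
    simp only [Pi.add_apply] at hmono
    rw [intervalIntegral.integral_const,
      intervalIntegral.integral_add (hfc2.intervalIntegrable _ _) intervalIntegrable_const,
      intervalIntegral.integral_const] at hmono
    simp only [smul_eq_mul] at hmono
    nlinarith [hmono]
  have step4 : (2 * h) * K ≤ 4 * h ^ 2 * I2 + I1 := by
    have hpt : ∀ t ∈ Set.Icc (-h) h,
        (2 * h) * (2 * ‖f t‖ * ‖f' t‖) ≤ 4 * h ^ 2 * ‖f' t‖ ^ 2 + ‖f t‖ ^ 2 := by
      intro t _
      nlinarith [sq_nonneg (2 * h * ‖f' t‖ - ‖f t‖), norm_nonneg (f t), norm_nonneg (f' t),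
        hh.le]
    have hmono := intervalIntegral.integral_mono_on (μ := volume) hhh
      ((continuous_const.mul hbcont).intervalIntegrable _ _)
      (((continuous_const.mul hfc2').add hfc2).intervalIntegrable _ _) hpt
    simp only [Pi.add_apply, Pi.mul_apply] at hmono
    rw [intervalIntegral.integral_const_mul,
      intervalIntegral.integral_add (f := fun t => 4 * h ^ 2 * ‖f' t‖ ^ 2) (g := fun t => ‖f t‖ ^ 2)
        ((continuous_const.mul hfc2').intervalIntegrable _ _)
        (hfc2.intervalIntegrable _ _),
      intervalIntegral.integral_const_mul] at hmono
    exact hmono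
  have key : h * ((1 / h) * I1 + 2 * h * I2) = I1 + 2 * h ^ 2 * I2 := by
    field_simp
  rw [← mul_le_mul_iff_right₀ hh, key]
  nlinarith [step3, step4]

lemma disk_compare {τ c : ℝ} (hc : 0 < c) (hcτ : c < τ) {g : ℝ × ℝ → ℝ}
    (hg : Continuous g) (hgs : HasCompactSupport g) (hg0 : ∀ z, 0 ≤ g z) :
    (∫ x in (-c)..c, ∫ y in (-(Real.sqrt (τ^2 - x^2)))..(Real.sqrt (τ^2 - x^2)), g (x, y))
      ≤ ∫ z in {z : ℝ × ℝ | z.1^2 + z.2^2 < τ^2}, g z := by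
  set B : Set (ℝ × ℝ) := {z : ℝ × ℝ | z.1^2 + z.2^2 < τ^2} with hBdef
  have hB : MeasurableSet B :=
    (isOpen_lt (by fun_prop : Continuous fun z : ℝ × ℝ => z.1^2 + z.2^2)
      continuous_const).measurableSet
  have hgint : Integrable g := hg.integrable_of_hasCompactSupport hgs
  set G : ℝ × ℝ → ℝ := B.indicator g with hGdef
  have hGint : Integrable G := hgint.indicator hB
  have hGprod : Integrable G ((volume : Measure ℝ).prod (volume : Measure ℝ)) := by
    rwa [← Measure.volume_eq_prod]
  have hG0 : ∀ z, 0 ≤ G z := fun z => Set.indicator_nonneg (fun w _ => hg0 w) z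
  set J : ℝ → ℝ := fun x => ∫ y, G (x, y) with hJdef
  have hJint : Integrable J := hGprod.integral_prod_left
  have hJ0 : ∀ x, 0 ≤ J x := fun x => integral_nonneg (fun y => hG0 (x, y))
  have hcc : (-c : ℝ) ≤ c := by linarith
  have hkey : ∀ x ∈ Set.Ioc (-c) c,
      (∫ y in (-(Real.sqrt (τ^2 - x^2)))..(Real.sqrt (τ^2 - x^2)), g (x, y)) = J x := by
    intro x hx
    have hxc : |x| ≤ c := by
      rw [abs_le]; exact ⟨hx.1.le, hx.2⟩
    have hx2 : x^2 < τ^2 := by nlinarith [abs_nonneg x, sq_abs x, abs_le.mp hxc]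
    have hτx : 0 < τ^2 - x^2 := by linarith
    set h : ℝ := Real.sqrt (τ^2 - x^2) with hhdef
    have hhp : 0 < h := Real.sqrt_pos.2 hτx
    have hsq : h^2 = τ^2 - x^2 := Real.sq_sqrt hτx.le
    have hiff : ∀ y : ℝ, (x, y) ∈ B ↔ y ∈ Set.Ioo (-h) h := by
      intro y
      simp only [hBdef, Set.mem_setOf_eq, Set.mem_Ioo]
      constructor
      · intro hy
        constructor
        · nlinarith [sq_nonneg (y + h)]
        · nlinarith [sq_nonneg (y - h)]
      · rintro ⟨h1, h2⟩
        nlinarith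
    have hset : (fun y => G (x, y)) = (Set.Ioo (-h) h).indicator (fun y => g (x, y)) := by
      funext y
      simp only [hGdef, Set.indicator_apply, hiff y]
    have : J x = ∫ y in Set.Ioo (-h) h, g (x, y) := by
      rw [hJdef]
      simp only [hset]
      exact integral_indicator measurableSet_Ioo
    rw [this, intervalIntegral.integral_of_le (by linarith), integral_Ioc_eq_integral_Ioo]
  calc (∫ x in (-c)..c, ∫ y in (-(Real.sqrt (τ^2 - x^2)))..(Real.sqrt (τ^2 - x^2)), g (x, y))
      = ∫ x in Set.Ioc (-c) c, J x := by
        rw [intervalIntegral.integral_of_le hcc]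
        exact setIntegral_congr_fun measurableSet_Ioc hkey
    _ ≤ ∫ x, J x := setIntegral_le_integral hJint (Filter.Eventually.of_forall hJ0)
    _ = ∫ z, G z := by
        rw [Measure.volume_eq_prod]
        exact integral_integral hGprod
    _ = ∫ z in B, g z := integral_indicator hB

lemma cont_param {Q : ℝ × ℝ → ℝ} (hQ : Continuous Q) {e₁ e₂ : ℝ → ℝ}
    (h1 : Continuous e₁) (h2 : Continuous e₂) :
    Continuous fun x => ∫ y in e₁ x..e₂ x, Q (x, y) := by
  have key : ∀ x, (∫ y in e₁ x..e₂ x, Q (x, y)) =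
      (∫ y in (0:ℝ)..e₂ x, Q (x, y)) - ∫ y in (0:ℝ)..e₁ x, Q (x, y) := by
    intro x
    have hQx : Continuous fun y => Q (x, y) := hQ.comp (by fun_prop)
    rw [intervalIntegral.integral_interval_sub_left
      (hQx.intervalIntegrable _ _) (hQx.intervalIntegrable _ _)]
  have hc2 : Continuous fun x => ∫ y in (0:ℝ)..e₂ x, Q (x, y) :=
    intervalIntegral.continuous_parametric_intervalIntegral_of_continuous
      (by exact hQ) h2
  have hc1 : Continuous fun x => ∫ y in (0:ℝ)..e₁ x, Q (x, y) :=
    intervalIntegral.continuous_parametric_intervalIntegral_of_continuous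
      (by exact hQ) h1
  exact (hc2.sub hc1).congr fun x => (key x).symm

/-- For `0 < c < τ` and continuous `γ₁ ≤ γ₂` on `[-c,c]` taking values in
`[-√(τ²-x²), √(τ²-x²)]`, with `δ = sup (γ₂ - γ₁)`, every smooth compactly supported
`φ : ℝ² → ℂ` satisfies
`∫_{-c}^{c} ∫_{γ₁(x)}^{γ₂(x)} |φ|² dy dx
  ≤ 4τδ ∫_{B(0,τ)} |∂_yφ|² + (δ/√(τ²-c²)) ∫_{B(0,τ)} |φ|²`,
where `B(0,τ)` is the open Euclidean disk of radius `τ`. -/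
theorem mass_estimate_over_thin_region
    (c τ : ℝ) (hc : 0 < c) (hcτ : c < τ)
    (γ₁ γ₂ : ℝ → ℝ)
    (hγ₁ : ContinuousOn γ₁ (Set.Icc (-c) c)) (hγ₂ : ContinuousOn γ₂ (Set.Icc (-c) c))
    (hbound : ∀ x ∈ Set.Icc (-c) c,
      -Real.sqrt (τ ^ 2 - x ^ 2) ≤ γ₁ x ∧ γ₁ x ≤ γ₂ x ∧ γ₂ x ≤ Real.sqrt (τ ^ 2 - x ^ 2))
    (δ : ℝ) (hδ : δ = sSup ((fun x => γ₂ x - γ₁ x) '' Set.Icc (-c) c))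
    (φ : ℝ × ℝ → ℂ) (hφ : ContDiff ℝ (⊤ : ℕ∞) φ) (hφsupp : HasCompactSupport φ) :
    (∫ x in (-c)..c, ∫ y in (γ₁ x)..(γ₂ x), ‖φ (x, y)‖ ^ 2)
      ≤ 4 * τ * δ * (∫ z in {z : ℝ × ℝ | z.1 ^ 2 + z.2 ^ 2 < τ ^ 2}, ‖pd2 φ z‖ ^ 2)
        + (δ / Real.sqrt (τ ^ 2 - c ^ 2))
          * ∫ z in {z : ℝ × ℝ | z.1 ^ 2 + z.2 ^ 2 < τ ^ 2}, ‖φ z‖ ^ 2 := by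
  have hcc : (-c : ℝ) ≤ c := by linarith
  have h0mem : (0:ℝ) ∈ Set.Icc (-c) c := by constructor <;> linarith
  -- continuous extensions of γ₁, γ₂
  set g₁ : ℝ → ℝ := Set.IccExtend hcc ((Set.Icc (-c) c).restrict γ₁) with hg1def
  set g₂ : ℝ → ℝ := Set.IccExtend hcc ((Set.Icc (-c) c).restrict γ₂) with hg2def
  have hg1c : Continuous g₁ :=
    Continuous.Icc_extend' (continuousOn_iff_continuous_restrict.mp hγ₁)
  have hg2c : Continuous g₂ :=
    Continuous.Icc_extend' (continuousOn_iff_continuous_restrict.mp hγ₂)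
  have hg1eq : ∀ x ∈ Set.Icc (-c) c, g₁ x = γ₁ x := fun x hx =>
    Set.IccExtend_of_mem hcc _ hx
  have hg2eq : ∀ x ∈ Set.Icc (-c) c, g₂ x = γ₂ x := fun x hx =>
    Set.IccExtend_of_mem hcc _ hx
  -- δ facts
  have hbddA : BddAbove ((fun x => γ₂ x - γ₁ x) '' Set.Icc (-c) c) :=
    (isCompact_Icc.image_of_continuousOn (hγ₂.sub hγ₁)).bddAbove
  have hδub : ∀ x ∈ Set.Icc (-c) c, γ₂ x - γ₁ x ≤ δ := fun x hx =>
    hδ ▸ le_csSup hbddA (Set.mem_image_of_mem _ hx)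
  have hδ0 : 0 ≤ δ := by
    have h1 := (hbound 0 h0mem).2.1
    have h2 := hδub 0 h0mem
    linarith
  -- geometry
  set s : ℝ := Real.sqrt (τ ^ 2 - c ^ 2) with hsdef
  have hτc : 0 < τ ^ 2 - c ^ 2 := by nlinarith
  have hsp : 0 < s := Real.sqrt_pos.2 hτc
  set hfun : ℝ → ℝ := fun x => Real.sqrt (τ ^ 2 - x ^ 2) with hhfun
  have hhfc : Continuous hfun := by
    apply Real.continuous_sqrt.comp; fun_prop
  -- integrands
  set Q1 : ℝ × ℝ → ℝ := fun z => ‖φ z‖ ^ 2 with hQ1def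
  set Q2 : ℝ × ℝ → ℝ := fun z => ‖pd2 φ z‖ ^ 2 with hQ2def
  have hQ1c : Continuous Q1 := by rw [hQ1def]; exact (hφ.continuous.norm.pow 2)
  have hQ2c : Continuous Q2 := by rw [hQ2def]; exact ((pd2_continuous hφ).norm.pow 2)
  have hQ1s : HasCompactSupport Q1 :=
    hφsupp.comp_left (g := fun w : ℂ => ‖w‖ ^ 2) (by simp)
  have hQ2s : HasCompactSupport Q2 :=
    (pd2_compactSupport hφ hφsupp).comp_left (g := fun w : ℂ => ‖w‖ ^ 2) (by simp)
  have hQ10 : ∀ z, 0 ≤ Q1 z := fun z => by positivity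
  have hQ20 : ∀ z, 0 ≤ Q2 z := fun z => by positivity
  -- the x-dependent inner integrals
  set F : ℝ → ℝ := fun x => ∫ y in g₁ x..g₂ x, Q1 (x, y) with hFdef
  set I1 : ℝ → ℝ := fun x => ∫ y in (-(hfun x))..(hfun x), Q1 (x, y) with hI1def
  set I2 : ℝ → ℝ := fun x => ∫ y in (-(hfun x))..(hfun x), Q2 (x, y) with hI2def
  have hFc : Continuous F := cont_param hQ1c hg1c hg2c
  have hI1c : Continuous I1 := cont_param hQ1c hhfc.neg hhfc
  have hI2c : Continuous I2 := cont_param hQ2c hhfc.neg hhfc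
  have hfun0 : ∀ x, 0 ≤ hfun x := by
    intro x; rw [hhfun]; positivity
  have hI10 : ∀ x, 0 ≤ I1 x := by
    intro x
    apply intervalIntegral.integral_nonneg (neg_le_self (hfun0 x))
    intro y _
    have : Q1 (x, y) = ‖φ (x, y)‖ ^ 2 := by rw [hQ1def]
    rw [this]; positivity
  have hI20 : ∀ x, 0 ≤ I2 x := by
    intro x
    apply intervalIntegral.integral_nonneg (neg_le_self (hfun0 x))
    intro y _
    have : Q2 (x, y) = ‖pd2 φ (x, y)‖ ^ 2 := by rw [hQ2def]
    rw [this]; positivity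
  -- pointwise bound in x
  have hpt : ∀ x ∈ Set.Icc (-c) c, F x ≤ δ / s * I1 x + 2 * τ * δ * I2 x := by
    intro x hx
    have hx2 : x ^ 2 ≤ c ^ 2 := sq_le_sq' hx.1 hx.2
    have hτx : 0 < τ ^ 2 - x ^ 2 := by nlinarith
    have hhp : 0 < hfun x := Real.sqrt_pos.2 hτx
    have hhs : s ≤ hfun x := Real.sqrt_le_sqrt (by nlinarith)
    have hhτ : hfun x ≤ τ := by
      have : hfun x ≤ Real.sqrt (τ ^ 2) := Real.sqrt_le_sqrt (by nlinarith)
      rwa [Real.sqrt_sq (by linarith : (0:ℝ) ≤ τ)] at this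
    obtain ⟨b1, b2, b3⟩ := hbound x hx
    have hf : Continuous fun y => φ (x, y) := hφ.continuous.comp (by fun_prop)
    have hf' : Continuous fun y => pd2 φ (x, y) := (pd2_continuous hφ).comp (by fun_prop)
    have hder : ∀ t, HasDerivAt (fun y => φ (x, y)) (pd2 φ (x, t)) t :=
      fun t => hasDerivAt_slice hφ x t
    set C : ℝ := (1 / hfun x) * I1 x + 2 * (hfun x) * I2 x with hCdef
    have hyb : ∀ y ∈ Set.Icc (γ₁ x) (γ₂ x), ‖φ (x, y)‖ ^ 2 ≤ C := by
      intro y hy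
      have hy' : y ∈ Set.Icc (-(hfun x)) (hfun x) :=
        ⟨le_trans b1 hy.1, le_trans hy.2 b3⟩
      exact slice_bound hf hf' hder hhp hy'
    have hC0 : 0 ≤ C := by
      have := hI10 x; have := hI20 x
      have h1 : 0 ≤ (1 / hfun x) * I1 x := by positivity
      have h2 : 0 ≤ 2 * (hfun x) * I2 x := by positivity
      rw [hCdef]; linarith
    have hFx : F x = ∫ y in γ₁ x..γ₂ x, Q1 (x, y) := by
      show (∫ y in g₁ x..g₂ x, Q1 (x, y)) = _
      rw [hg1eq x hx, hg2eq x hx]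
    have step1 : F x ≤ (γ₂ x - γ₁ x) * C := by
      rw [hFx]
      have := intervalIntegral.integral_mono_on (μ := volume) b2
        ((hQ1c.comp (by fun_prop : Continuous fun y : ℝ => ((x:ℝ), y))).intervalIntegrable _ _)
        (intervalIntegrable_const (c := C)) hyb
      rwa [intervalIntegral.integral_const, smul_eq_mul] at this
    have step2 : (γ₂ x - γ₁ x) * C ≤ δ * C :=
      mul_le_mul_of_nonneg_right (hδub x hx) hC0
    have step3 : δ * C ≤ δ * ((1 / s) * I1 x + 2 * τ * I2 x) := by
      apply mul_le_mul_of_nonneg_left _ hδ0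
      have e1 : (1 / hfun x) * I1 x ≤ (1 / s) * I1 x :=
        mul_le_mul_of_nonneg_right (by
          apply one_div_le_one_div_of_le hsp hhs) (hI10 x)
      have e2 : 2 * (hfun x) * I2 x ≤ 2 * τ * I2 x :=
        mul_le_mul_of_nonneg_right (by linarith) (hI20 x)
      rw [hCdef]; linarith
    calc F x ≤ (γ₂ x - γ₁ x) * C := step1
      _ ≤ δ * C := step2
      _ ≤ δ * ((1 / s) * I1 x + 2 * τ * I2 x) := step3
      _ = δ / s * I1 x + 2 * τ * δ * I2 x := by ring
  -- rewrite the LHS with the extended functions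
  have hLHS : (∫ x in (-c)..c, ∫ y in (γ₁ x)..(γ₂ x), ‖φ (x, y)‖ ^ 2)
      = ∫ x in (-c)..c, F x := by
    apply intervalIntegral.integral_congr
    intro x hx
    rw [Set.uIcc_of_le hcc] at hx
    show _ = ∫ y in g₁ x..g₂ x, Q1 (x, y)
    rw [hg1eq x hx, hg2eq x hx]
  -- integrate the pointwise bound
  have hmain : (∫ x in (-c)..c, F x)
      ≤ ∫ x in (-c)..c, (δ / s * I1 x + 2 * τ * δ * I2 x) :=
    intervalIntegral.integral_mono_on hcc (hFc.intervalIntegrable _ _)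
      (((continuous_const.mul hI1c).add (continuous_const.mul hI2c)).intervalIntegrable _ _)
      hpt
  have hsplit : (∫ x in (-c)..c, (δ / s * I1 x + 2 * τ * δ * I2 x))
      = δ / s * (∫ x in (-c)..c, I1 x) + 2 * τ * δ * ∫ x in (-c)..c, I2 x := by
    rw [intervalIntegral.integral_add (f := fun x => δ / s * I1 x) (g := fun x => 2 * τ * δ * I2 x)
      ((continuous_const.mul hI1c).intervalIntegrable _ _)
      ((continuous_const.mul hI2c).intervalIntegrable _ _),
      intervalIntegral.integral_const_mul, intervalIntegral.integral_const_mul]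
  -- disk comparisons
  have hd1 : (∫ x in (-c)..c, I1 x)
      ≤ ∫ z in {z : ℝ × ℝ | z.1 ^ 2 + z.2 ^ 2 < τ ^ 2}, ‖φ z‖ ^ 2 :=
    disk_compare hc hcτ hQ1c hQ1s hQ10
  have hd2 : (∫ x in (-c)..c, I2 x)
      ≤ ∫ z in {z : ℝ × ℝ | z.1 ^ 2 + z.2 ^ 2 < τ ^ 2}, ‖pd2 φ z‖ ^ 2 :=
    disk_compare hc hcτ hQ2c hQ2s hQ20
  set A1 : ℝ := ∫ z in {z : ℝ × ℝ | z.1 ^ 2 + z.2 ^ 2 < τ ^ 2}, ‖φ z‖ ^ 2 with hA1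
  set A2 : ℝ := ∫ z in {z : ℝ × ℝ | z.1 ^ 2 + z.2 ^ 2 < τ ^ 2}, ‖pd2 φ z‖ ^ 2 with hA2
  have hA2nn : 0 ≤ A2 := by
    rw [hA2]
    apply setIntegral_nonneg
    · exact (isOpen_lt (by fun_prop : Continuous fun z : ℝ × ℝ => z.1 ^ 2 + z.2 ^ 2)
        continuous_const).measurableSet
    · intro z _; positivity
  have hIi1 : (∫ x in (-c)..c, I1 x) ≥ 0 :=
    intervalIntegral.integral_nonneg hcc fun x _ => hI10 x
  have hIi2 : (∫ x in (-c)..c, I2 x) ≥ 0 :=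
    intervalIntegral.integral_nonneg hcc fun x _ => hI20 x
  have hds : 0 ≤ δ / s := by positivity
  have hτδ : 0 ≤ τ * δ := by nlinarith
  calc (∫ x in (-c)..c, ∫ y in (γ₁ x)..(γ₂ x), ‖φ (x, y)‖ ^ 2)
      = ∫ x in (-c)..c, F x := hLHS
    _ ≤ ∫ x in (-c)..c, (δ / s * I1 x + 2 * τ * δ * I2 x) := hmain
    _ = δ / s * (∫ x in (-c)..c, I1 x) + 2 * τ * δ * ∫ x in (-c)..c, I2 x := hsplit
    _ ≤ δ / s * A1 + 2 * τ * δ * A2 := by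
        have e1 : δ / s * (∫ x in (-c)..c, I1 x) ≤ δ / s * A1 :=
          mul_le_mul_of_nonneg_left hd1 hds
        have e2 : 2 * τ * δ * (∫ x in (-c)..c, I2 x) ≤ 2 * τ * δ * A2 :=
          mul_le_mul_of_nonneg_left hd2 (by nlinarith)
        linarith
    _ ≤ 4 * τ * δ * A2 + δ / s * A1 := by nlinarith
end

section
/- Let B : ℝ² → ℝ be continuous and define the Landau-gauge potential A₁(x,y) = −∫_0^y B(x,t) dt. Let Ṽ : ℝ → ℝ be continuous and bounded, e ∈ ℝ, and let g : ℝ → ℝ be twice continuously differentiable with g(t) > 0 for all t and −g''(y) − Ṽ(y) g(y) = e g(y) for all y ∈ ℝ. Let τ > 0, let Ω ⊂ B(0,τ) be a measurable set, and let V : ℝ² → ℝ be measurable and locally bounded with V(x,y) = Ṽ(y) for all (x,y) ∉ Ω. Set β = min_{t∈[−τ,τ]} g(t)², Γ = max_{t∈[−τ,τ]} g(t)², and M = sup_{(x,y)∈Ω} |Ṽ(y) − V(x,y)| (assumed finite). Then for every smooth compactly supported φ : ℝ² → ℂ, setting ψ(x,y) = φ(x,y) g(y), one has ∫_{ℝ²}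 ( |i ∂_x ψ + A₁ ψ|² + |∂_y ψ|² − V |ψ|² ) dx dy ≥ β ∫_{B(0,τ)} ( |i ∂_x φ + A₁ φ|² + |∂_y φ|² ) dx dy − Γ M ∫_Ω |φ|² dx dy + e ∫_{ℝ²} g(y)² |φ|² dx dy. -/
open MeasureTheory

lemma normsq_helper (z : ℂ) : ‖z‖ ^ 2 = z.re ^ 2 + z.im ^ 2 := by
  rw [Complex.sq_norm, Complex.normSq_apply]; ring

lemma norm_expand (a b : ℂ) (c d : ℝ) :
    ‖a * (c : ℂ) + b * (d : ℂ)‖ ^ 2 = c ^ 2 * ‖a‖ ^ 2 + d ^ 2 * ‖b‖ ^ 2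
      + 2 * c * d * ((starRingEnd ℂ a * b).re) := by
  simp only [normsq_helper, Complex.add_re, Complex.add_im, Complex.mul_re, Complex.mul_im,
    Complex.ofReal_re, Complex.ofReal_im, Complex.conj_re, Complex.conj_im]
  ring

lemma hasDerivAt_normsq {u : ℝ → ℂ} {u' : ℂ} {t : ℝ} (hu : HasDerivAt u u' t) :
    HasDerivAt (fun s => ‖u s‖ ^ 2) (2 * ((starRingEnd ℂ (u t)) * u').re) t := by
  have hre : HasDerivAt (fun s => (u s).re) u'.re t :=
    Complex.reCLM.hasFDerivAt.comp_hasDerivAt t hu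
  have him : HasDerivAt (fun s => (u s).im) u'.im t :=
    Complex.imCLM.hasFDerivAt.comp_hasDerivAt t hu
  have h := (hre.mul hre).add (him.mul him)
  have hf : (fun s => ‖u s‖ ^ 2) = ((fun s => (u s).re) * fun s => (u s).re)
      + (fun s => (u s).im) * fun s => (u s).im := by
    funext s; simp only [Pi.add_apply, Pi.mul_apply]; rw [normsq_helper]; ring
  rw [hf]; refine h.congr_deriv ?_
  simp only [Complex.mul_re, Complex.conj_re, Complex.conj_im]; ring

/-- Intermediate lower bound on the magnetic Schrödinger quadratic form in the
Landau gauge: with `g > 0` a `C²` solution of `-g'' - Ṽ g = e g`, `Ω ⊆ B(0,τ)` measurable,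
`V = Ṽ(y)` off `Ω`, `β = min_{[-τ,τ]} g²`, `Γ = max_{[-τ,τ]} g²`, and
`M ≥ sup_Ω |Ṽ(y) - V|`, one has, for `ψ = φ·g(y)` with `φ` smooth compactly supported,
`q(ψ) ≥ β ∫_{B(0,τ)} (|i∂ₓφ + A₁φ|² + |∂_yφ|²) - Γ M ∫_Ω |φ|² + e ∫ g²|φ|²`. -/
theorem intermediate_lower_bound
    (B : ℝ × ℝ → ℝ) (hB : Continuous B)
    (A₁ : ℝ × ℝ → ℝ) (hA₁ : ∀ x y : ℝ, A₁ (x, y) = -∫ t in (0:ℝ)..y, B (x, t))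
    (Vt : ℝ → ℝ) (hVt : Continuous Vt) (hVtbdd : ∃ C : ℝ, ∀ y : ℝ, |Vt y| ≤ C)
    (e : ℝ) (g : ℝ → ℝ) (hg : ContDiff ℝ 2 g) (hgpos : ∀ t : ℝ, 0 < g t)
    (hode : ∀ y : ℝ, -(deriv (deriv g) y) - Vt y * g y = e * g y)
    (τ : ℝ) (hτ : 0 < τ)
    (Ω : Set (ℝ × ℝ)) (hΩmeas : MeasurableSet Ω)
    (hΩsub : Ω ⊆ {z : ℝ × ℝ | z.1 ^ 2 + z.2 ^ 2 < τ ^ 2})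
    (V : ℝ × ℝ → ℝ) (hVmeas : Measurable V)
    (hVloc : ∀ K : Set (ℝ × ℝ), IsCompact K → ∃ C : ℝ, ∀ z ∈ K, |V z| ≤ C)
    (hVout : ∀ z : ℝ × ℝ, z ∉ Ω → V z = Vt z.2)
    (β Γ M : ℝ)
    (hβ : IsLeast ((fun t => g t ^ 2) '' Set.Icc (-τ) τ) β)
    (hΓ : IsGreatest ((fun t => g t ^ 2) '' Set.Icc (-τ) τ) Γ)
    (hM : ∀ z ∈ Ω, |Vt z.2 - V z| ≤ M)
    (φ : ℝ × ℝ → ℂ) (hφ : ContDiff ℝ (⊤ : ℕ∞) φ) (hφsupp : HasCompactSupport φ)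
    (ψ : ℝ × ℝ → ℂ) (hψ : ∀ x y : ℝ, ψ (x, y) = φ (x, y) * (g y : ℂ)) :
    (∫ z : ℝ × ℝ,
        (‖Complex.I * pd1 ψ z + (A₁ z : ℂ) * ψ z‖ ^ 2 + ‖pd2 ψ z‖ ^ 2 - V z * ‖ψ z‖ ^ 2))
      ≥ β * (∫ z in {z : ℝ × ℝ | z.1 ^ 2 + z.2 ^ 2 < τ ^ 2},
            (‖Complex.I * pd1 φ z + (A₁ z : ℂ) * φ z‖ ^ 2 + ‖pd2 φ z‖ ^ 2))
        - Γ * M * (∫ z in Ω, ‖φ z‖ ^ 2)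
        + e * ∫ z : ℝ × ℝ, g z.2 ^ 2 * ‖φ z‖ ^ 2 := by
  classical
  obtain ⟨C₀, hC₀⟩ := hVtbdd
  -- regularity of g
  have hgd : Differentiable ℝ g := hg.differentiable two_ne_zero
  have hg1 : ContDiff ℝ 1 g := hg.of_le one_le_two
  have hg'1 : ContDiff ℝ 1 (deriv g) := by
    have h2 : ContDiff ℝ (1 + 1) g := by norm_num; exact hg
    exact (contDiff_succ_iff_deriv.mp h2).2.2
  have hg'd : Differentiable ℝ (deriv g) := hg'1.differentiable one_ne_zero
  have hg'c : Continuous (deriv g) := hg'1.continuous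
  have hg''c : Continuous (deriv (deriv g)) := hg'1.continuous_deriv le_rfl
  have hgc : Continuous g := hg.continuous
  -- regularity of φ
  have hφd : Differentiable ℝ φ := hφ.differentiable (by simp)
  have hK : IsCompact (tsupport φ) := hφsupp
  have hφc : Continuous φ := hφ.continuous
  -- partial derivatives as fderiv applications
  have hpd1' : ∀ z : ℝ × ℝ, HasDerivAt (fun s => φ (s, z.2)) (fderiv ℝ φ z ((1:ℝ), (0:ℝ))) z.1 :=
    fun z => (hφd z).hasFDerivAt.comp_hasDerivAt z.1
      ((hasDerivAt_id z.1).prodMk (hasDerivAt_const z.1 z.2))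
  have hpd2' : ∀ z : ℝ × ℝ, HasDerivAt (fun t => φ (z.1, t)) (fderiv ℝ φ z ((0:ℝ), (1:ℝ))) z.2 :=
    fun z => (hφd z).hasFDerivAt.comp_hasDerivAt z.2
      ((hasDerivAt_const z.2 z.1).prodMk (hasDerivAt_id z.2))
  have hpd1eq : pd1 φ = fun z => fderiv ℝ φ z ((1:ℝ), (0:ℝ)) :=
    funext fun z => (hpd1' z).deriv
  have hpd2eq : pd2 φ = fun z => fderiv ℝ φ z ((0:ℝ), (1:ℝ)) :=
    funext fun z => (hpd2' z).deriv
  have hfdc : Continuous (fderiv ℝ φ) := hφ.continuous_fderiv (by simp)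
  have hP1c : Continuous (pd1 φ) := by rw [hpd1eq]; exact hfdc.clm_apply continuous_const
  have hP2c : Continuous (pd2 φ) := by rw [hpd2eq]; exact hfdc.clm_apply continuous_const
  have hP1supp : HasCompactSupport (pd1 φ) := by rw [hpd1eq]; exact hφsupp.fderiv_apply ℝ _
  have hP2supp : HasCompactSupport (pd2 φ) := by rw [hpd2eq]; exact hφsupp.fderiv_apply ℝ _
  have hψz : ∀ z : ℝ × ℝ, ψ z = φ z * (g z.2 : ℂ) := fun z => hψ z.1 z.2
  -- derivatives of ψ
  have key1 : ∀ z : ℝ × ℝ, pd1 ψ z = pd1 φ z * (g z.2 : ℂ) := by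
    intro z
    show deriv (fun s => ψ (s, z.2)) z.1 = _
    rw [show (fun s => ψ (s, z.2)) = fun s => φ (s, z.2) * (g z.2 : ℂ) from
      funext fun s => hψ s z.2]
    rw [deriv_mul_const (hpd1' z).differentiableAt]
    rfl
  have hgC : ∀ t : ℝ, HasDerivAt (fun s => ((g s : ℝ) : ℂ)) ((deriv g t : ℝ) : ℂ) t :=
    fun t => ((hgd t).hasDerivAt).ofReal_comp
  have hP2ψ : ∀ z : ℝ × ℝ, HasDerivAt (fun t => ψ (z.1, t))
      (pd2 φ z * (g z.2 : ℂ) + φ z * ((deriv g z.2 : ℝ) : ℂ)) z.2 := by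
    intro z
    have h := ((hpd2eq ▸ (hpd2' z) : HasDerivAt (fun t => φ (z.1, t)) (pd2 φ z) z.2)).mul
      (hgC z.2)
    have : (fun t => ψ (z.1, t)) = fun t => φ (z.1, t) * (g t : ℂ) :=
      funext fun t => hψ z.1 t
    rw [this]
    exact h
  have key2 : ∀ z : ℝ × ℝ, pd2 ψ z = pd2 φ z * (g z.2 : ℂ) + φ z * ((deriv g z.2 : ℝ) : ℂ) :=
    fun z => (hP2ψ z).deriv
  -- continuity of A₁
  have hA₁eq : A₁ = fun z : ℝ × ℝ => -∫ t in (0:ℝ)..z.2, B (z.1, t) :=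
    funext fun z => hA₁ z.1 z.2
  have hA₁c : Continuous A₁ := by
    rw [hA₁eq]
    exact (intervalIntegral.continuous_parametric_intervalIntegral_of_continuous
      (f := fun (z : ℝ × ℝ) t => B (z.1, t)) (μ := volume)
      (hB.comp ((continuous_fst.comp continuous_fst).prodMk continuous_snd))
      continuous_snd).neg
  -- the main auxiliary functions
  set F : ℝ × ℝ → ℝ := fun z =>
    ‖Complex.I * pd1 φ z + (A₁ z : ℂ) * φ z‖ ^ 2 + ‖pd2 φ z‖ ^ 2 with hFdef
  set E : ℝ × ℝ → ℝ := fun z => g z.2 ^ 2 * ‖φ z‖ ^ 2 with hEdef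
  set W : ℝ × ℝ → ℝ := fun z => (Vt z.2 - V z) * (g z.2 ^ 2 * ‖φ z‖ ^ 2) with hWdef
  set D : ℝ × ℝ → ℝ := fun z =>
    (deriv g z.2 ^ 2 + g z.2 * deriv (deriv g) z.2) * ‖φ z‖ ^ 2
      + g z.2 * deriv g z.2 * (2 * ((starRingEnd ℂ (φ z)) * pd2 φ z).re) with hDdef
  -- D is the derivative in the second variable of h x t := g t * g' t * ‖φ (x,t)‖²
  have hDhas : ∀ x y : ℝ,
      HasDerivAt (fun t => g t * deriv g t * ‖φ (x, t)‖ ^ 2) (D (x, y)) y := by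
    intro x y
    have hgg' : HasDerivAt (fun t => g t * deriv g t)
        (deriv g y * deriv g y + g y * deriv (deriv g) y) y :=
      ((hgd y).hasDerivAt).mul ((hg'd y).hasDerivAt)
    have hu : HasDerivAt (fun t => φ (x, t)) (pd2 φ (x, y)) y :=
      hpd2eq ▸ hpd2' (x, y)
    have hn := hasDerivAt_normsq hu
    have h := hgg'.mul hn
    refine h.congr_deriv ?_
    rw [hDdef]
    ring
  -- pointwise identity
  have hkey : ∀ z : ℝ × ℝ,
      ‖Complex.I * pd1 ψ z + (A₁ z : ℂ) * ψ z‖ ^ 2 + ‖pd2 ψ z‖ ^ 2 - V z * ‖ψ z‖ ^ 2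
      = g z.2 ^ 2 * F z + (W z + (e * E z + D z)) := by
    intro z
    rw [key1 z, key2 z, hψz z]
    have e1 : Complex.I * (pd1 φ z * (g z.2 : ℂ)) + (A₁ z : ℂ) * (φ z * (g z.2 : ℂ))
        = (Complex.I * pd1 φ z + (A₁ z : ℂ) * φ z) * ((g z.2 : ℝ) : ℂ) := by ring
    have e2 : ‖(Complex.I * pd1 φ z + (A₁ z : ℂ) * φ z) * ((g z.2 : ℝ) : ℂ)‖ ^ 2
        = ‖Complex.I * pd1 φ z + (A₁ z : ℂ) * φ z‖ ^ 2 * g z.2 ^ 2 := by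
      rw [norm_mul, mul_pow, Complex.norm_real, Real.norm_eq_abs, sq_abs]
    have e3 : ‖φ z * ((g z.2 : ℝ) : ℂ)‖ ^ 2 = ‖φ z‖ ^ 2 * g z.2 ^ 2 := by
      rw [norm_mul, mul_pow, Complex.norm_real, Real.norm_eq_abs, sq_abs]
    rw [e1, e2, e3, norm_expand]
    have e4 : ((starRingEnd ℂ) (pd2 φ z) * φ z).re = ((starRingEnd ℂ) (φ z) * pd2 φ z).re := by
      simp [Complex.mul_re, Complex.conj_re, Complex.conj_im]; ring
    simp only [hFdef, hWdef, hEdef, hDdef]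
    rw [e4]
    have hodez := hode z.2
    linear_combination (g z.2 * ‖φ z‖ ^ 2) * hodez
  -- vanishing outside the support of φ
  have hzero : ∀ z ∉ tsupport φ, φ z = 0 ∧ pd1 φ z = 0 ∧ pd2 φ z = 0 := by
    intro z hz
    have hf : fderiv ℝ φ z = 0 := by
      by_contra h
      exact hz (support_fderiv_subset ℝ (Function.mem_support.2 h))
    refine ⟨image_eq_zero_of_notMem_tsupport hz, ?_, ?_⟩ <;>
      simp [hpd1eq, hpd2eq, hf]
  -- continuity and integrability of the pieces
  have hXc : Continuous fun z => Complex.I * pd1 φ z + (A₁ z : ℂ) * φ z :=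
    (continuous_const.mul hP1c).add ((Complex.continuous_ofReal.comp hA₁c).mul hφc)
  have hFc : Continuous F := by
    rw [hFdef]; exact ((hXc.norm).pow 2).add ((hP2c.norm).pow 2)
  have hFsupp : HasCompactSupport F := by
    apply HasCompactSupport.intro hK
    intro z hz
    obtain ⟨h0, h1, h2⟩ := hzero z hz
    simp [hFdef, h0, h1, h2]
  have hFint : Integrable F := hFc.integrable_of_hasCompactSupport hFsupp
  have hFnn : ∀ z, 0 ≤ F z := fun z => by simp only [hFdef]; positivity
  have hGFc : Continuous fun z : ℝ × ℝ => g z.2 ^ 2 * F z :=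
    ((hgc.comp continuous_snd).pow 2).mul hFc
  have hGFsupp : HasCompactSupport fun z : ℝ × ℝ => g z.2 ^ 2 * F z :=
    HasCompactSupport.mul_left hFsupp
  have hGFint : Integrable fun z : ℝ × ℝ => g z.2 ^ 2 * F z :=
    hGFc.integrable_of_hasCompactSupport hGFsupp
  have hGFnn : ∀ z : ℝ × ℝ, 0 ≤ g z.2 ^ 2 * F z :=
    fun z => mul_nonneg (sq_nonneg _) (hFnn z)
  have hEc : Continuous E := by
    rw [hEdef]; exact ((hgc.comp continuous_snd).pow 2).mul ((hφc.norm).pow 2)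
  have hEsupp : HasCompactSupport E := by
    apply HasCompactSupport.intro hK
    intro z hz
    simp [hEdef, (hzero z hz).1]
  have hEint : Integrable E := hEc.integrable_of_hasCompactSupport hEsupp
  have hEnn : ∀ z, 0 ≤ E z := fun z => by simp only [hEdef]; positivity
  have hφ2c : Continuous fun z : ℝ × ℝ => ‖φ z‖ ^ 2 := (hφc.norm).pow 2
  have hφ2supp : HasCompactSupport fun z : ℝ × ℝ => ‖φ z‖ ^ 2 := by
    apply HasCompactSupport.intro hK
    intro z hz
    simp [(hzero z hz).1]
  have hφ2int : Integrable fun z : ℝ × ℝ => ‖φ z‖ ^ 2 :=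
    hφ2c.integrable_of_hasCompactSupport hφ2supp
  have hDc : Continuous D := by
    rw [hDdef]
    refine Continuous.add ?_ ?_
    · exact (((hg'c.comp continuous_snd).pow 2).add
        ((hgc.comp continuous_snd).mul (hg''c.comp continuous_snd))).mul ((hφc.norm).pow 2)
    · exact (((hgc.comp continuous_snd).mul (hg'c.comp continuous_snd))).mul
        (continuous_const.mul (Complex.continuous_re.comp
          ((Complex.continuous_conj.comp hφc).mul hP2c)))
  have hDsupp : HasCompactSupport D := by
    apply HasCompactSupport.intro hK
    intro z hz
    simp [hDdef, (hzero z hz).1]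
  have hDint : Integrable D := hDc.integrable_of_hasCompactSupport hDsupp
  -- integrability of W via a dominating indicator function
  have hWm : AEStronglyMeasurable W volume := by
    have : Measurable W := (((hVt.comp continuous_snd).measurable).sub hVmeas).mul
      hEc.measurable
    exact this.aestronglyMeasurable
  obtain ⟨z0, hz0⟩ := hEc.exists_forall_ge_of_hasCompactSupport hEsupp
  obtain ⟨CV, hCV⟩ := hVloc (tsupport φ) hK
  have hC₀0 : 0 ≤ C₀ := (abs_nonneg _).trans (hC₀ 0)
  have hCE0 : 0 ≤ E z0 := hEnn z0
  have hWint : Integrable W := by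
    refine Integrable.mono'
      (g := (tsupport φ).indicator fun _ => (C₀ + CV) * E z0)
      ((integrable_indicator_iff (isClosed_tsupport φ).measurableSet).2
        (integrableOn_const hK.measure_lt_top.ne))
      hWm (ae_of_all _ ?_)
    intro z
    by_cases hz : z ∈ tsupport φ
    · rw [Set.indicator_of_mem hz]
      have hCVz : |V z| ≤ CV := hCV z hz
      have habs : |Vt z.2 - V z| ≤ C₀ + CV := by
        calc |Vt z.2 - V z| ≤ |Vt z.2| + |V z| := abs_sub _ _
          _ ≤ C₀ + CV := add_le_add (hC₀ z.2) hCVz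
      have hWnorm : ‖W z‖ = |Vt z.2 - V z| * E z := by
        simp only [hWdef, hEdef, Real.norm_eq_abs]
        rw [abs_mul, abs_of_nonneg (show (0:ℝ) ≤ g z.2 ^ 2 * ‖φ z‖ ^ 2 by positivity)]
      rw [hWnorm]
      exact mul_le_mul habs (hz0 z) (hEnn z) ((abs_nonneg _).trans habs)
    · rw [Set.indicator_of_notMem hz]
      have h0 : φ z = 0 := image_eq_zero_of_notMem_tsupport hz
      simp [hWdef, h0]
  -- the derivative term integrates to zero
  have hDzero : (∫ z : ℝ × ℝ, D z) = 0 := by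
    have hvol : (volume : Measure (ℝ × ℝ)) = (volume : Measure ℝ).prod volume :=
      Measure.volume_eq_prod ℝ ℝ
    have hDint' : Integrable D ((volume : Measure ℝ).prod volume) := hvol ▸ hDint
    have hinner : ∀ x : ℝ, (∫ y : ℝ, D (x, y)) = 0 := by
      intro x
      have hφx : ContDiff ℝ 1 (fun t => φ (x, t)) :=
        (hφ.of_le (by simp)).comp (contDiff_const.prodMk contDiff_id)
      have hsq : ContDiff ℝ 1 (fun t => ‖φ (x, t)‖ ^ 2) := by
        rw [show (fun t => ‖φ (x, t)‖ ^ 2)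
            = fun t => (φ (x, t)).re ^ 2 + (φ (x, t)).im ^ 2 from
          funext fun t => normsq_helper _]
        exact ((Complex.reCLM.contDiff.comp hφx).pow 2).add
          ((Complex.imCLM.contDiff.comp hφx).pow 2)
      have hhx1 : ContDiff ℝ 1 (fun t => g t * deriv g t * ‖φ (x, t)‖ ^ 2) :=
        (hg1.mul hg'1).mul hsq
      have hsx : HasCompactSupport (fun t => g t * deriv g t * ‖φ (x, t)‖ ^ 2) := by
        apply HasCompactSupport.intro (hK.image continuous_snd)
        intro t ht
        have hmem : (x, t) ∉ tsupport φ := fun hmem => ht ⟨(x, t), hmem, rfl⟩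
        simp [image_eq_zero_of_notMem_tsupport hmem]
      have hder : (fun y => D (x, y))
          = deriv (fun t => g t * deriv g t * ‖φ (x, t)‖ ^ 2) :=
        funext fun y => ((hDhas x y).deriv).symm
      rw [hder]
      have hderc : Continuous (deriv (fun t => g t * deriv g t * ‖φ (x, t)‖ ^ 2)) :=
        hhx1.continuous_deriv le_rfl
      have hderint : Integrable (deriv (fun t => g t * deriv g t * ‖φ (x, t)‖ ^ 2)) :=
        hderc.integrable_of_hasCompactSupport hsx.deriv
      rw [← intervalIntegral.integral_Iic_add_Ioi (b := (0:ℝ)) (μ := volume) hderint.integrableOn hderint.integrableOn,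
        HasCompactSupport.integral_Iic_deriv_eq hhx1 hsx 0,
        HasCompactSupport.integral_Ioi_deriv_eq hhx1 hsx 0]
      ring
    rw [hvol, integral_prod _ hDint']
    simp only [hinner, integral_zero]
  -- rewrite the left-hand side
  rw [show (fun z : ℝ × ℝ =>
        ‖Complex.I * pd1 ψ z + (A₁ z : ℂ) * ψ z‖ ^ 2 + ‖pd2 ψ z‖ ^ 2 - V z * ‖ψ z‖ ^ 2)
      = fun z => g z.2 ^ 2 * F z + (W z + (e * E z + D z)) from funext hkey]
  have hsum := integral_add hGFint (hWint.add ((hEint.const_mul e).add hDint))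
  have hsum2 := integral_add hWint ((hEint.const_mul e).add hDint)
  have hsum3 := integral_add (hEint.const_mul e) hDint
  simp only [Pi.add_apply] at hsum hsum2 hsum3
  rw [hsum, hsum2, hsum3, hDzero, add_zero, integral_const_mul]
  -- the two inequalities
  have hIcc : ∀ z : ℝ × ℝ, z ∈ {z : ℝ × ℝ | z.1 ^ 2 + z.2 ^ 2 < τ ^ 2} →
      z.2 ∈ Set.Icc (-τ) τ := by
    intro z hz
    simp only [Set.mem_setOf_eq] at hz
    constructor <;> nlinarith [sq_nonneg z.1, sq_nonneg (z.2 - τ), sq_nonneg (z.2 + τ)]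
  have hdisk_meas : MeasurableSet {z : ℝ × ℝ | z.1 ^ 2 + z.2 ^ 2 < τ ^ 2} :=
    (isOpen_lt ((continuous_fst.pow 2).add (continuous_snd.pow 2)) continuous_const).measurableSet
  have h1 : β * (∫ z in {z : ℝ × ℝ | z.1 ^ 2 + z.2 ^ 2 < τ ^ 2}, F z)
      ≤ ∫ z : ℝ × ℝ, g z.2 ^ 2 * F z := by
    have s1 : (∫ z in {z : ℝ × ℝ | z.1 ^ 2 + z.2 ^ 2 < τ ^ 2}, g z.2 ^ 2 * F z)
        ≤ ∫ z : ℝ × ℝ, g z.2 ^ 2 * F z :=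
      setIntegral_le_integral hGFint (ae_of_all _ hGFnn)
    have s2 : (∫ z in {z : ℝ × ℝ | z.1 ^ 2 + z.2 ^ 2 < τ ^ 2}, β * F z)
        ≤ ∫ z in {z : ℝ × ℝ | z.1 ^ 2 + z.2 ^ 2 < τ ^ 2}, g z.2 ^ 2 * F z := by
      apply setIntegral_mono_on (hFint.const_mul β).integrableOn hGFint.integrableOn hdisk_meas
      intro z hz
      exact mul_le_mul_of_nonneg_right (hβ.2 ⟨z.2, hIcc z hz, rfl⟩) (hFnn z)
    rw [← integral_const_mul]
    exact s2.trans s1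
  have h2 : -(Γ * M * ∫ z in Ω, ‖φ z‖ ^ 2) ≤ ∫ z : ℝ × ℝ, W z := by
    have hWΩ : (∫ z : ℝ × ℝ, W z) = ∫ z in Ω, W z :=
      (setIntegral_eq_integral_of_forall_compl_eq_zero fun z hz => by
        simp only [hWdef]; rw [hVout z hz]; ring).symm
    have s3 : (∫ z in Ω, -(Γ * M) * ‖φ z‖ ^ 2) ≤ ∫ z in Ω, W z := by
      apply setIntegral_mono_on (hφ2int.const_mul _).integrableOn hWint.integrableOn hΩmeas
      intro z hz
      simp only [hWdef]
      have hb : g z.2 ^ 2 ≤ Γ := hΓ.2 ⟨z.2, hIcc z (hΩsub hz), rfl⟩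
      have habs := abs_le.mp (hM z hz)
      have hM0 : 0 ≤ M := (abs_nonneg _).trans (hM z hz)
      have hp : (0:ℝ) ≤ ‖φ z‖ ^ 2 := sq_nonneg _
      have hbp : (0:ℝ) ≤ g z.2 ^ 2 * ‖φ z‖ ^ 2 := by positivity
      have t1 : (-M) * (g z.2 ^ 2 * ‖φ z‖ ^ 2) ≤ (Vt z.2 - V z) * (g z.2 ^ 2 * ‖φ z‖ ^ 2) :=
        mul_le_mul_of_nonneg_right habs.1 hbp
      have t2 : g z.2 ^ 2 * ‖φ z‖ ^ 2 ≤ Γ * ‖φ z‖ ^ 2 := mul_le_mul_of_nonneg_right hb hp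
      have t3 : M * (g z.2 ^ 2 * ‖φ z‖ ^ 2) ≤ M * (Γ * ‖φ z‖ ^ 2) :=
        mul_le_mul_of_nonneg_left t2 hM0
      nlinarith
    have s4 : (∫ z in Ω, -(Γ * M) * ‖φ z‖ ^ 2) = -(Γ * M * ∫ z in Ω, ‖φ z‖ ^ 2) := by
      rw [integral_const_mul]; ring
    rw [hWΩ]
    linarith [s3, s4]
  linarith
end

section
/- Let B : ℝ² → ℝ be continuous, let V : ℝ² → ℝ be measurable and locally bounded, and let α ∈ ℝ. Define the rotation 𝒰(x,y) = (x cos α − y sin α, x sin α + y cos α), the Landau-gauge potential A = (A₁, 0) with A₁(x,y) = −∫_0^y B(x,t) dt, the function F(x,y) = ∫_0^{x sin α + y cos α} B(x cos α − y sin α, t) dt, the rotated potential 𝒜 = ( −cos α · F, sin α · F ), and the rotated scalar potential 𝒱 = V ∘ 𝒰. Then for every smooth compactly supported f : ℝ² → ℂ, setting (Uf)(x,y) = f(𝒰(x,y)), one has ∫_{ℝ²} ( |i ∇f + A f|² − V |f|² ) dx dy = ∫_{ℝ²} ( |i ∇(Uf) + 𝒜 (Uf)|² − 𝒱 |Uf|²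 ) dx dy. -/
open MeasureTheory

lemma rot_norm_sq (a b : ℂ) (c s : ℝ) (h : c ^ 2 + s ^ 2 = 1) :
    ‖(c : ℂ) * a + (s : ℂ) * b‖ ^ 2 + ‖-(s : ℂ) * a + (c : ℂ) * b‖ ^ 2
      = ‖a‖ ^ 2 + ‖b‖ ^ 2 := by
  simp only [Complex.sq_norm, Complex.normSq_apply, Complex.add_re,
    Complex.add_im, Complex.mul_re, Complex.mul_im, Complex.neg_re, Complex.neg_im,
    Complex.ofReal_re, Complex.ofReal_im]
  linear_combination (a.re * a.re + a.im * a.im + b.re * b.re + b.im * b.im) * h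

lemma pd1_eq (f : ℝ × ℝ → ℂ) (hf : Differentiable ℝ f) (w : ℝ × ℝ) :
    pd1 f w = fderiv ℝ f w (1, 0) := by
  have h1 : HasDerivAt (fun s : ℝ => (s, w.2)) ((1 : ℝ), (0 : ℝ)) w.1 :=
    (hasDerivAt_id _).prodMk (hasDerivAt_const _ _)
  exact ((hf w).hasFDerivAt.comp_hasDerivAt w.1 h1).deriv

lemma pd2_eq (f : ℝ × ℝ → ℂ) (hf : Differentiable ℝ f) (w : ℝ × ℝ) :
    pd2 f w = fderiv ℝ f w (0, 1) := by
  have h1 : HasDerivAt (fun t : ℝ => (w.1, t)) ((0 : ℝ), (1 : ℝ)) w.2 :=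
    (hasDerivAt_const _ _).prodMk (hasDerivAt_id _)
  exact ((hf w).hasFDerivAt.comp_hasDerivAt w.2 h1).deriv

lemma fderiv_combo (f : ℝ × ℝ → ℂ) (hf : Differentiable ℝ f) (w : ℝ × ℝ) (c s : ℝ) :
    fderiv ℝ f w (c, s) = (c : ℂ) * pd1 f w + (s : ℂ) * pd2 f w := by
  have h : ((c, s) : ℝ × ℝ) = c • ((1 : ℝ), (0 : ℝ)) + s • ((0 : ℝ), (1 : ℝ)) := by
    simp [Prod.ext_iff]
  rw [h, map_add, (fderiv ℝ f w).map_smul, (fderiv ℝ f w).map_smul,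
    pd1_eq f hf, pd2_eq f hf]
  simp [Complex.real_smul]

/-- Quadratic-form identity under rotation: with the rotation
`𝒰(x,y) = (x cos α - y sin α, x sin α + y cos α)`, the Landau gauge `A = (A₁, 0)`,
`A₁(x,y) = -∫_0^y B(x,t) dt`, the rotated potential `𝒜 = (-cos α · F, sin α · F)` with
`F(x,y) = ∫_0^{x sin α + y cos α} B(x cos α - y sin α, t) dt`, and `𝒱 = V ∘ 𝒰`, every smooth
compactly supported `f : ℝ² → ℂ` satisfies, with `(Uf) = f ∘ 𝒰`,
`∫ (|i∇f + Af|² - V|f|²) = ∫ (|i∇(Uf) + 𝒜(Uf)|² - 𝒱|Uf|²)`. -/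
theorem quadratic_form_rotation_identity
    (B : ℝ × ℝ → ℝ) (hB : Continuous B)
    (V : ℝ × ℝ → ℝ) (hVmeas : Measurable V)
    (hVloc : ∀ K : Set (ℝ × ℝ), IsCompact K → ∃ C : ℝ, ∀ z ∈ K, |V z| ≤ C)
    (α : ℝ)
    (𝒰 : ℝ × ℝ → ℝ × ℝ)
    (h𝒰 : ∀ x y : ℝ, 𝒰 (x, y)
      = (x * Real.cos α - y * Real.sin α, x * Real.sin α + y * Real.cos α))
    (A₁ : ℝ × ℝ → ℝ) (hA₁ : ∀ x y : ℝ, A₁ (x, y) = -∫ t in (0:ℝ)..y, B (x, t))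
    (F : ℝ × ℝ → ℝ)
    (hF : ∀ x y : ℝ, F (x, y)
      = ∫ t in (0:ℝ)..(x * Real.sin α + y * Real.cos α),
          B (x * Real.cos α - y * Real.sin α, t))
    (𝒜₁ 𝒜₂ : ℝ × ℝ → ℝ)
    (h𝒜₁ : ∀ z : ℝ × ℝ, 𝒜₁ z = -Real.cos α * F z)
    (h𝒜₂ : ∀ z : ℝ × ℝ, 𝒜₂ z = Real.sin α * F z)
    (f : ℝ × ℝ → ℂ) (hf : ContDiff ℝ (⊤ : ℕ∞) f) (hfsupp : HasCompactSupport f)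
    (Uf : ℝ × ℝ → ℂ) (hUf : ∀ z : ℝ × ℝ, Uf z = f (𝒰 z)) :
    (∫ z : ℝ × ℝ,
        (‖Complex.I * pd1 f z + (A₁ z : ℂ) * f z‖ ^ 2 + ‖Complex.I * pd2 f z‖ ^ 2
          - V z * ‖f z‖ ^ 2))
      = ∫ z : ℝ × ℝ,
          (‖Complex.I * pd1 Uf z + (𝒜₁ z : ℂ) * Uf z‖ ^ 2
            + ‖Complex.I * pd2 Uf z + (𝒜₂ z : ℂ) * Uf z‖ ^ 2
            - V (𝒰 z) * ‖Uf z‖ ^ 2) := by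
  set c := Real.cos α with hc
  set sn := Real.sin α with hsn
  have hcs : c ^ 2 + sn ^ 2 = 1 := by
    rw [hc, hsn, add_comm]; exact Real.sin_sq_add_cos_sq α
  have hdiff : Differentiable ℝ f := hf.differentiable (by simp)
  -- 𝒰 as a linear map
  set L : (ℝ × ℝ) →ₗ[ℝ] (ℝ × ℝ) :=
    { toFun := fun p => (p.1 * c - p.2 * sn, p.1 * sn + p.2 * c)
      map_add' := by intro p q; simp [Prod.ext_iff]; constructor <;> ring
      map_smul' := by intro r p; simp [Prod.ext_iff]; constructor <;> ring } with hL
  have h𝒰L : ∀ z : ℝ × ℝ, 𝒰 z = L z := fun z => h𝒰 z.1 z.2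
  have hdet : LinearMap.det L = 1 := by
    rw [← LinearMap.det_toMatrix (Module.Basis.finTwoProd ℝ), Matrix.det_fin_two]
    simp [LinearMap.toMatrix_apply, Module.Basis.finTwoProd, hL]
    linear_combination hcs
  have hmp : MeasurePreserving L (volume : Measure (ℝ × ℝ)) volume := by
    refine ⟨L.continuous_of_finiteDimensional.measurable, ?_⟩
    rw [Measure.map_linearMap_addHaar_eq_smul_addHaar volume (by rw [hdet]; norm_num)]
    simp [hdet]
  -- 𝒰 as a homeomorphism (for the measurable embedding)
  have hleft : ∀ p : ℝ × ℝ,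
      ((p.1 * c - p.2 * sn) * c + (p.1 * sn + p.2 * c) * sn,
        -((p.1 * c - p.2 * sn) * sn) + (p.1 * sn + p.2 * c) * c) = p := by
    intro p
    have h1 : (p.1 * c - p.2 * sn) * c + (p.1 * sn + p.2 * c) * sn = p.1 := by
      linear_combination p.1 * hcs
    have h2 : -((p.1 * c - p.2 * sn) * sn) + (p.1 * sn + p.2 * c) * c = p.2 := by
      linear_combination p.2 * hcs
    rw [h1, h2]
  have hright : ∀ p : ℝ × ℝ,
      ((p.1 * c + p.2 * sn) * c - (-(p.1 * sn) + p.2 * c) * sn,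
        (p.1 * c + p.2 * sn) * sn + (-(p.1 * sn) + p.2 * c) * c) = p := by
    intro p
    have h1 : (p.1 * c + p.2 * sn) * c - (-(p.1 * sn) + p.2 * c) * sn = p.1 := by
      linear_combination p.1 * hcs
    have h2 : (p.1 * c + p.2 * sn) * sn + (-(p.1 * sn) + p.2 * c) * c = p.2 := by
      linear_combination p.2 * hcs
    rw [h1, h2]
  set e : (ℝ × ℝ) ≃ₜ (ℝ × ℝ) :=
    { toFun := fun p => (p.1 * c - p.2 * sn, p.1 * sn + p.2 * c)
      invFun := fun p => (p.1 * c + p.2 * sn, -(p.1 * sn) + p.2 * c)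
      left_inv := fun p => hleft p
      right_inv := fun p => hright p
      continuous_toFun := by fun_prop
      continuous_invFun := by fun_prop } with he
  have hLe : (L : ℝ × ℝ → ℝ × ℝ) = e := rfl
  have hemb : MeasurableEmbedding (L : ℝ × ℝ → ℝ × ℝ) := by
    rw [hLe]; exact e.measurableEmbedding
  -- the integrand of the left-hand side
  set G : ℝ × ℝ → ℝ := fun w =>
    ‖Complex.I * pd1 f w + (A₁ w : ℂ) * f w‖ ^ 2 + ‖Complex.I * pd2 f w‖ ^ 2
      - V w * ‖f w‖ ^ 2 with hG
  -- relation between F and A₁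
  have hFA : ∀ z : ℝ × ℝ, F z = -A₁ (𝒰 z) := by
    intro z
    have h1 : F z = ∫ t in (0:ℝ)..(z.1 * sn + z.2 * c), B (z.1 * c - z.2 * sn, t) :=
      hF z.1 z.2
    have h2 : 𝒰 z = (z.1 * c - z.2 * sn, z.1 * sn + z.2 * c) := h𝒰 z.1 z.2
    rw [h1, h2, hA₁, neg_neg]
  -- derivatives of Uf
  have hUd : ∀ z : ℝ × ℝ,
      pd1 Uf z = (c : ℂ) * pd1 f (𝒰 z) + (sn : ℂ) * pd2 f (𝒰 z) ∧
      pd2 Uf z = (-sn : ℝ) * pd1 f (𝒰 z) + (c : ℂ) * pd2 f (𝒰 z) := by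
    intro z
    have hz : 𝒰 z = (z.1 * c - z.2 * sn, z.1 * sn + z.2 * c) := h𝒰 z.1 z.2
    constructor
    · have hfun : (fun s => Uf (s, z.2))
          = fun s => f (s * c - z.2 * sn, s * sn + z.2 * c) := by
        funext s; rw [hUf, h𝒰]
      have hg : HasDerivAt (fun s : ℝ => (s * c - z.2 * sn, s * sn + z.2 * c))
          ((c : ℝ), (sn : ℝ)) z.1 := by
        have := (((hasDerivAt_id z.1).mul_const c).sub_const (z.2 * sn)).prodMk
          (((hasDerivAt_id z.1).mul_const sn).add_const (z.2 * c))
        simpa using this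
      have hF' : HasFDerivAt f (fderiv ℝ f (𝒰 z)) (z.1 * c - z.2 * sn, z.1 * sn + z.2 * c) := by
        rw [← hz]; exact (hdiff (𝒰 z)).hasFDerivAt
      have hd : HasDerivAt (fun s => f (s * c - z.2 * sn, s * sn + z.2 * c))
          (fderiv ℝ f (𝒰 z) ((c : ℝ), (sn : ℝ))) z.1 := hF'.comp_hasDerivAt z.1 hg
      show deriv (fun s => Uf (s, z.2)) z.1 = _
      rw [hfun, hd.deriv, fderiv_combo f hdiff (𝒰 z) c sn]
    · have hfun : (fun t => Uf (z.1, t))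
          = fun t => f (z.1 * c - t * sn, z.1 * sn + t * c) := by
        funext t; rw [hUf, h𝒰]
      have hg : HasDerivAt (fun t : ℝ => (z.1 * c - t * sn, z.1 * sn + t * c))
          ((-sn : ℝ), (c : ℝ)) z.2 := by
        have := ((hasDerivAt_const z.2 (z.1 * c)).sub ((hasDerivAt_id z.2).mul_const sn)).prodMk
          ((hasDerivAt_const z.2 (z.1 * sn)).add ((hasDerivAt_id z.2).mul_const c))
        simpa using this
      have hF' : HasFDerivAt f (fderiv ℝ f (𝒰 z)) (z.1 * c - z.2 * sn, z.1 * sn + z.2 * c) := by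
        rw [← hz]; exact (hdiff (𝒰 z)).hasFDerivAt
      have hd : HasDerivAt (fun t => f (z.1 * c - t * sn, z.1 * sn + t * c))
          (fderiv ℝ f (𝒰 z) ((-sn : ℝ), (c : ℝ))) z.2 := hF'.comp_hasDerivAt z.2 hg
      show deriv (fun t => Uf (z.1, t)) z.2 = _
      rw [hfun, hd.deriv, fderiv_combo f hdiff (𝒰 z) (-sn) c]
  -- pointwise identity
  have key : ∀ z : ℝ × ℝ,
      (‖Complex.I * pd1 Uf z + (𝒜₁ z : ℂ) * Uf z‖ ^ 2
        + ‖Complex.I * pd2 Uf z + (𝒜₂ z : ℂ) * Uf z‖ ^ 2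
        - V (𝒰 z) * ‖Uf z‖ ^ 2) = G (𝒰 z) := by
    intro z
    obtain ⟨h1, h2⟩ := hUd z
    set w := 𝒰 z with hw
    set a : ℂ := Complex.I * pd1 f w + (A₁ w : ℂ) * f w with ha
    set b : ℂ := Complex.I * pd2 f w with hb
    have hA1 : (𝒜₁ z : ℝ) = c * A₁ w := by rw [h𝒜₁, hFA]; ring
    have hA2 : (𝒜₂ z : ℝ) = -sn * A₁ w := by rw [h𝒜₂, hFA]; ring
    have e1 : Complex.I * pd1 Uf z + (𝒜₁ z : ℂ) * Uf z = (c : ℂ) * a + (sn : ℂ) * b := by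
      rw [h1, hUf, hA1, ha, hb]
      push_cast
      ring
    have e2 : Complex.I * pd2 Uf z + (𝒜₂ z : ℂ) * Uf z = -(sn : ℂ) * a + (c : ℂ) * b := by
      rw [h2, hUf, hA2, ha, hb]
      push_cast
      ring
    rw [e1, e2, rot_norm_sq a b c sn hcs, hG, hUf]
  calc (∫ z : ℝ × ℝ,
        (‖Complex.I * pd1 f z + (A₁ z : ℂ) * f z‖ ^ 2 + ‖Complex.I * pd2 f z‖ ^ 2
          - V z * ‖f z‖ ^ 2))
      = ∫ w : ℝ × ℝ, G w := rfl
    _ = ∫ z : ℝ × ℝ, G (L z) := (hmp.integral_comp hemb G).symm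
    _ = ∫ z : ℝ × ℝ, G (𝒰 z) := by
        refine integral_congr_ae (Filter.Eventually.of_forall fun z => ?_)
        exact congrArg G (h𝒰L z).symm
    _ = _ := by
        refine integral_congr_ae (Filter.Eventually.of_forall fun z => ?_)
        exact (key z).symm
end

section
/- Let Ṽ : ℝ → ℝ be bounded and measurable and let e ∈ ℝ be such that ∫_ℝ |v'(t)|² dt − ∫_ℝ Ṽ(t) |v(t)|² dt ≥ e ∫_ℝ |v(t)|² dt for every smooth compactly supported v : ℝ → ℂ. Let A₁ : ℝ² → ℝ be continuous. Then for every smooth compactly supported u : ℝ² → ℂ one has ∫_{ℝ²} ( |i ∂_x u + A₁ u|² + |∂_y u|² − Ṽ(y) |u(x,y)|² ) dx dy ≥ e ∫_{ℝ²} |u(x,y)|² dx dy. -/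
open MeasureTheory

lemma pd1_eq_s12 (u : ℝ × ℝ → ℂ) (hu : ContDiff ℝ (⊤ : ℕ∞) u) (z : ℝ × ℝ) :
    pd1 u z = fderiv ℝ u z (1, 0) := by
  have h := (hu.differentiable (by simp) z).hasFDerivAt
  have hline : HasDerivAt (fun s : ℝ => ((s, z.2) : ℝ × ℝ)) ((1 : ℝ), (0 : ℝ)) z.1 := by
    simpa using (hasDerivAt_id z.1).prodMk (hasDerivAt_const z.1 z.2)
  have : HasDerivAt (fun s => u (s, z.2)) (fderiv ℝ u z (1, 0)) z.1 := by
    have := h.comp_hasDerivAt (f := fun s : ℝ => ((s, z.2) : ℝ × ℝ)) z.1 (by simpa using hline)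
    exact this
  exact this.deriv

lemma pd2_eq_s12 (u : ℝ × ℝ → ℂ) (hu : ContDiff ℝ (⊤ : ℕ∞) u) (z : ℝ × ℝ) :
    pd2 u z = fderiv ℝ u z (0, 1) := by
  have h := (hu.differentiable (by simp) z).hasFDerivAt
  have hline : HasDerivAt (fun t : ℝ => ((z.1, t) : ℝ × ℝ)) ((0 : ℝ), (1 : ℝ)) z.2 := by
    simpa using (hasDerivAt_const z.2 z.1).prodMk (hasDerivAt_id z.2)
  have : HasDerivAt (fun t => u (z.1, t)) (fderiv ℝ u z (0, 1)) z.2 := by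
    have := h.comp_hasDerivAt (f := fun t : ℝ => ((z.1, t) : ℝ × ℝ)) z.2 (by simpa using hline)
    exact this
  exact this.deriv

lemma pd1_cont (u : ℝ × ℝ → ℂ) (hu : ContDiff ℝ (⊤ : ℕ∞) u) : Continuous (pd1 u) := by
  have : pd1 u = fun z => fderiv ℝ u z (1, 0) := funext (pd1_eq_s12 u hu)
  rw [this]
  exact (ContinuousLinearMap.apply ℝ ℂ ((1 : ℝ), (0 : ℝ))).continuous.comp
    (hu.continuous_fderiv (by simp))

lemma pd2_cont (u : ℝ × ℝ → ℂ) (hu : ContDiff ℝ (⊤ : ℕ∞) u) : Continuous (pd2 u) := by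
  have : pd2 u = fun z => fderiv ℝ u z (0, 1) := funext (pd2_eq_s12 u hu)
  rw [this]
  exact (ContinuousLinearMap.apply ℝ ℂ ((0 : ℝ), (1 : ℝ))).continuous.comp
    (hu.continuous_fderiv (by simp))

lemma pd1_supp (u : ℝ × ℝ → ℂ) (hu : ContDiff ℝ (⊤ : ℕ∞) u) (husupp : HasCompactSupport u) :
    HasCompactSupport (pd1 u) := by
  have : pd1 u = (fun L : (ℝ × ℝ) →L[ℝ] ℂ => L (1, 0)) ∘ fderiv ℝ u :=
    funext (pd1_eq_s12 u hu)
  rw [this]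
  exact (husupp.fderiv ℝ).comp_left rfl

lemma pd2_supp (u : ℝ × ℝ → ℂ) (hu : ContDiff ℝ (⊤ : ℕ∞) u) (husupp : HasCompactSupport u) :
    HasCompactSupport (pd2 u) := by
  have : pd2 u = (fun L : (ℝ × ℝ) →L[ℝ] ℂ => L (0, 1)) ∘ fderiv ℝ u :=
    funext (pd2_eq_s12 u hu)
  rw [this]
  exact (husupp.fderiv ℝ).comp_left rfl

/-- Slicing lower bound: if the one-dimensional form of `h = -d²/dt² - Ṽ` is
bounded below by `e`, i.e. `∫ |v'|² - ∫ Ṽ |v|² ≥ e ∫ |v|²` for all smooth compactly supported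
`v : ℝ → ℂ`, then for any continuous `A₁ : ℝ² → ℝ` and every smooth compactly supported
`u : ℝ² → ℂ`,
`∫ (|i∂ₓu + A₁u|² + |∂_yu|² - Ṽ(y)|u|²) ≥ e ∫ |u|²`. -/
theorem translation_invariant_region_lower_bound
    (Vt : ℝ → ℝ) (hVtmeas : Measurable Vt) (hVtbdd : ∃ C : ℝ, ∀ y : ℝ, |Vt y| ≤ C)
    (e : ℝ)
    (h1d : ∀ v : ℝ → ℂ, ContDiff ℝ (⊤ : ℕ∞) v → HasCompactSupport v →
      (∫ t : ℝ, ‖deriv v t‖ ^ 2) - (∫ t : ℝ, Vt t * ‖v t‖ ^ 2)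
        ≥ e * ∫ t : ℝ, ‖v t‖ ^ 2)
    (A₁ : ℝ × ℝ → ℝ) (hA₁ : Continuous A₁)
    (u : ℝ × ℝ → ℂ) (hu : ContDiff ℝ (⊤ : ℕ∞) u) (husupp : HasCompactSupport u) :
    (∫ z : ℝ × ℝ,
        (‖Complex.I * pd1 u z + (A₁ z : ℂ) * u z‖ ^ 2 + ‖pd2 u z‖ ^ 2
          - Vt z.2 * ‖u z‖ ^ 2))
      ≥ e * ∫ z : ℝ × ℝ, ‖u z‖ ^ 2 := by
  obtain ⟨C, hC⟩ := hVtbdd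
  have hucont := hu.continuous
  -- integrability of the pieces on the product
  have hIu : Integrable (fun z : ℝ × ℝ => ‖u z‖ ^ 2) := by
    exact (hucont.norm.pow 2).integrable_of_hasCompactSupport
      (husupp.norm.comp_left (g := fun r : ℝ => r ^ 2) (by norm_num) :)
  have hIf : Integrable (fun z : ℝ × ℝ => ‖Complex.I * pd1 u z + (A₁ z : ℂ) * u z‖ ^ 2) := by
    have hc : Continuous (fun z => Complex.I * pd1 u z + (A₁ z : ℂ) * u z) :=
      (continuous_const.mul (pd1_cont u hu)).add
        ((Complex.continuous_ofReal.comp hA₁).mul hucont)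
    have hs : HasCompactSupport (fun z => Complex.I * pd1 u z + (A₁ z : ℂ) * u z) := by
      apply HasCompactSupport.add
      · exact ((pd1_supp u hu husupp).mul_left)
      · exact husupp.mul_left
    exact (hc.norm.pow 2).integrable_of_hasCompactSupport
      (hs.norm.comp_left (g := fun r : ℝ => r ^ 2) (by norm_num) :)
  have hIg1 : Integrable (fun z : ℝ × ℝ => ‖pd2 u z‖ ^ 2) := by
    exact ((pd2_cont u hu).norm.pow 2).integrable_of_hasCompactSupport
      (((pd2_supp u hu husupp).norm).comp_left (g := fun r : ℝ => r ^ 2) (by norm_num) :)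
  have hIg2 : Integrable (fun z : ℝ × ℝ => Vt z.2 * ‖u z‖ ^ 2) := by
    apply hIu.bdd_mul (c := C)
    · exact (hVtmeas.comp measurable_snd).aestronglyMeasurable
    · exact ae_of_all _ fun z => by simpa [Real.norm_eq_abs] using hC z.2
  have hIG : Integrable (fun z : ℝ × ℝ => ‖pd2 u z‖ ^ 2 - Vt z.2 * ‖u z‖ ^ 2) := hIg1.sub hIg2
  -- split off the nonnegative first term
  have hsplit : (∫ z : ℝ × ℝ,
        (‖Complex.I * pd1 u z + (A₁ z : ℂ) * u z‖ ^ 2 + ‖pd2 u z‖ ^ 2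
          - Vt z.2 * ‖u z‖ ^ 2))
      = (∫ z : ℝ × ℝ, ‖Complex.I * pd1 u z + (A₁ z : ℂ) * u z‖ ^ 2)
        + ∫ z : ℝ × ℝ, (‖pd2 u z‖ ^ 2 - Vt z.2 * ‖u z‖ ^ 2) := by
    rw [← integral_add hIf hIG]
    congr 1; funext z; ring
  rw [hsplit]
  have hfnonneg : (0 : ℝ) ≤ ∫ z : ℝ × ℝ, ‖Complex.I * pd1 u z + (A₁ z : ℂ) * u z‖ ^ 2 :=
    integral_nonneg fun z => by positivity
  have key : (∫ z : ℝ × ℝ, (‖pd2 u z‖ ^ 2 - Vt z.2 * ‖u z‖ ^ 2))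
      ≥ e * ∫ z : ℝ × ℝ, ‖u z‖ ^ 2 := by
    rw [MeasureTheory.Measure.volume_eq_prod ℝ ℝ] at hIG hIu ⊢
    rw [MeasureTheory.integral_prod _ hIG, MeasureTheory.integral_prod _ hIu,
      ← MeasureTheory.integral_const_mul]
    apply integral_mono
    · simpa [MeasureTheory.integral_const_mul] using (hIu.const_mul e).integral_prod_left
    · exact hIG.integral_prod_left
    · intro x
      -- the slice
      set v : ℝ → ℂ := fun t => u (x, t) with hv
      have hvsm : ContDiff ℝ (⊤ : ℕ∞) v := hu.comp (contDiff_const.prodMk contDiff_id)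
      have hemb : Topology.IsClosedEmbedding (fun t : ℝ => ((x, t) : ℝ × ℝ)) := by
        have : Isometry (fun t : ℝ => ((x, t) : ℝ × ℝ)) :=
          Isometry.of_dist_eq fun a b => by
            simp [Prod.dist_eq, dist_nonneg]
        exact this.isClosedEmbedding
      have hvsupp : HasCompactSupport v := husupp.comp_isClosedEmbedding hemb
      have hvderiv : ∀ t, deriv v t = pd2 u (x, t) := fun t => rfl
      have hvcont := hvsm.continuous
      have hIv : Integrable (fun t => ‖v t‖ ^ 2) :=
        (hvcont.norm.pow 2).integrable_of_hasCompactSupport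
          (hvsupp.norm.comp_left (g := fun r : ℝ => r ^ 2) (by norm_num) :)
      have hIdv : Integrable (fun t => ‖deriv v t‖ ^ 2) := by
        have hdv : deriv v = fun t => pd2 u (x, t) := funext hvderiv
        have : Continuous (deriv v) := by
          rw [hdv]
          exact (pd2_cont u hu).comp (continuous_const.prodMk continuous_id)
        exact (this.norm.pow 2).integrable_of_hasCompactSupport
          ((hvsupp.deriv.norm).comp_left (g := fun r : ℝ => r ^ 2) (by norm_num) :)
      have hIVv : Integrable (fun t => Vt t * ‖v t‖ ^ 2) := by
        apply hIv.bdd_mul (c := C) hVtmeas.aestronglyMeasurable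
        exact ae_of_all _ fun t => by simpa [Real.norm_eq_abs] using hC t
      have := h1d v hvsm hvsupp
      rw [← integral_sub hIdv hIVv] at this
      calc e * ∫ y : ℝ, ‖u (x, y)‖ ^ 2 = e * ∫ t : ℝ, ‖v t‖ ^ 2 := rfl
        _ ≤ ∫ t : ℝ, (‖deriv v t‖ ^ 2 - Vt t * ‖v t‖ ^ 2) := this
        _ = ∫ y : ℝ, (‖pd2 u (x, y)‖ ^ 2 - Vt y * ‖u (x, y)‖ ^ 2) := by
            congr 1
  linarith
end
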